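/- arXiv:1608.06346 — 8 statements merged into one kernel-verified Lean document; each statement's English description precedes it below -/
import Mathlib

section
/- Let $f_1, f_2$ be two linearly independent polynomials in the space $S_3$ spanned by $r^3, r^2s, rs^2, s^3$. For $\xi=(a,b)\in\mathbb{R}^2$, let $P_\xi f$ denote the second-order Taylor polynomial of $f$ at $\xi$, and let $\pi_{1,2}$ denote the projection onto the span of $r,s,r^2,rs,s^2$. Then for almost every $\xi\in\mathbb{R}^2$ (equivalently, outside the zero set of a nonzero polynomial in $(a,b)$), the span of $\pi_{1,2}P_\xi f_1$ and $\pi_{1,2}P_\xi f_2$ has dimension $2$. -/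
open Matrix

/-- The linear map `π_{1,2} ∘ P_ξ` at `ξ = (a,b)`, acting on polynomials of degree ≤ 3
with zero constant term, written in the monomial basis `r, s, r², rs, s², r³, r²s, rs², s³`
of the domain and `r, s, r², rs, s²` of the codomain. -/
noncomputable def Lmat (a b : ℝ) : Matrix (Fin 5) (Fin 9) ℝ :=
  !![1,0,0,0,0,-3*a^2,-2*a*b,-b^2,0;
     0,1,0,0,0,0,-a^2,-2*a*b,-3*b^2;
     0,0,1,0,0,3*a,b,0,0;
     0,0,0,1,0,0,2*a,2*b,0;
     0,0,0,0,1,0,0,a,3*b]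

noncomputable def Lmap (a b : ℝ) : (Fin 9 → ℝ) →ₗ[ℝ] (Fin 5 → ℝ) :=
  (Lmat a b).mulVecLin

/-- `S₃` = span of `r³, r²s, rs², s³`. -/
noncomputable def S₃ : Submodule ℝ (Fin 9 → ℝ) :=
  Submodule.span ℝ {Pi.single (5 : Fin 9) 1, Pi.single 6 1, Pi.single 7 1, Pi.single 8 1}

lemma sum9 (g : Fin 9 → ℝ) : ∑ i, g i = g 0 + g 1 + g 2 + g 3 + g 4 + g 5 + g 6 + g 7 + g 8 := by
  rw [Fin.sum_univ_succ, Fin.sum_univ_eight]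
  simp only [show Fin.succ (0:Fin 8) = (1:Fin 9) from rfl, show Fin.succ (1:Fin 8) = (2:Fin 9) from rfl,
    show Fin.succ (2:Fin 8) = (3:Fin 9) from rfl, show Fin.succ (3:Fin 8) = (4:Fin 9) from rfl,
    show Fin.succ (4:Fin 8) = (5:Fin 9) from rfl, show Fin.succ (5:Fin 8) = (6:Fin 9) from rfl,
    show Fin.succ (6:Fin 8) = (7:Fin 9) from rfl, show Fin.succ (7:Fin 8) = (8:Fin 9) from rfl]
  ring

lemma S3_low {f : Fin 9 → ℝ} (hf : f ∈ S₃) (j : Fin 9) (hj : j.val < 5) : f j = 0 := by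
  have hle : S₃ ≤ LinearMap.ker (LinearMap.proj (R := ℝ) (φ := fun _ : Fin 9 => ℝ) j) := by
    rw [S₃, Submodule.span_le]
    intro x hx
    simp only [Set.mem_insert_iff, Set.mem_singleton_iff] at hx
    rcases hx with h|h|h|h <;> subst h <;>
      simp [LinearMap.mem_ker, Pi.single_apply, Fin.ext_iff] <;> omega
  exact hle hf

lemma Lrow2 (a b : ℝ) (f : Fin 9 → ℝ) (h : f 2 = 0) :
    Lmap a b f 2 = 3*a*f 5 + b*f 6 := by
  have hh : Lmap a b f 2 = ∑ j, Lmat a b 2 j * f j := rfl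
  rw [hh, sum9 (fun j => Lmat a b 2 j * f j)]
  show (0:ℝ)*f 0 + 0*f 1 + 1*f 2 + 0*f 3 + 0*f 4 + 3*a*f 5 + b*f 6 + 0*f 7 + 0*f 8 = _
  rw [h]; ring

lemma Lrow3 (a b : ℝ) (f : Fin 9 → ℝ) (h : f 3 = 0) :
    Lmap a b f 3 = 2*a*f 6 + 2*b*f 7 := by
  have hh : Lmap a b f 3 = ∑ j, Lmat a b 3 j * f j := rfl
  rw [hh, sum9 (fun j => Lmat a b 3 j * f j)]
  show (0:ℝ)*f 0 + 0*f 1 + 0*f 2 + 1*f 3 + 0*f 4 + 0*f 5 + 2*a*f 6 + 2*b*f 7 + 0*f 8 = _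
  rw [h]; ring

lemma Lrow4 (a b : ℝ) (f : Fin 9 → ℝ) (h : f 4 = 0) :
    Lmap a b f 4 = a*f 7 + 3*b*f 8 := by
  have hh : Lmap a b f 4 = ∑ j, Lmat a b 4 j * f j := rfl
  rw [hh, sum9 (fun j => Lmat a b 4 j * f j)]
  show (0:ℝ)*f 0 + 0*f 1 + 0*f 2 + 0*f 3 + 1*f 4 + 0*f 5 + 0*f 6 + a*f 7 + 3*b*f 8 = _
  rw [h]; ring

lemma sq3 {A B D : ℝ} (h : A^2 + B^2 + D^2 = 0) : A = 0 ∧ B = 0 ∧ D = 0 := by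
  refine ⟨?_, ?_, ?_⟩ <;> nlinarith [sq_nonneg A, sq_nonneg B, sq_nonneg D]

lemma fin9 {P : Fin 9 → Prop} (h0 : P 0) (h1 : P 1) (h2 : P 2) (h3 : P 3) (h4 : P 4)
    (h5 : P 5) (h6 : P 6) (h7 : P 7) (h8 : P 8) : ∀ j, P j := by
  intro j
  fin_cases j
  · exact h0
  · exact h1
  · exact h2
  · exact h3
  · exact h4
  · exact h5
  · exact h6
  · exact h7
  · exact h8

lemma pair_indep {u v : Fin 5 → ℝ} (i j : Fin 5)
    (h : u i * v j - u j * v i ≠ 0) : LinearIndependent ℝ ![u, v] := by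
  rw [LinearIndependent.pair_iff]
  intro s t hst
  have hi := congrFun hst i
  have hj := congrFun hst j
  simp only [Pi.add_apply, Pi.smul_apply, smul_eq_mul, Pi.zero_apply] at hi hj
  constructor
  · have hs : s * (u i * v j - u j * v i) = 0 := by linear_combination v j * hi - v i * hj
    rcases mul_eq_zero.mp hs with h' | h'
    · exact h'
    · exact absurd h' h
  · have ht : t * (u i * v j - u j * v i) = 0 := by linear_combination u i * hj - u j * hi
    rcases mul_eq_zero.mp ht with h' | h'
    · exact h'
    · exact absurd h' h

open MvPolynomial in
noncomputable def quadP (A B D : ℝ) : MvPolynomial (Fin 2) ℝ :=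
  C A * X 0 ^ 2 + C B * (X 0 * X 1) + C D * X 1 ^ 2

lemma P_eval (A1 B1 C1 A2 B2 C2 A3 B3 C3 x y : ℝ) :
    MvPolynomial.eval ![x,y] ((quadP A1 B1 C1)^2 + (quadP A2 B2 C2)^2 + (quadP A3 B3 C3)^2)
    = (A1*x^2+B1*(x*y)+C1*y^2)^2 + (A2*x^2+B2*(x*y)+C2*y^2)^2 + (A3*x^2+B3*(x*y)+C3*y^2)^2 := by
  simp [quadP]

theorem stmt0 (f₁ f₂ : Fin 9 → ℝ) (h₁ : f₁ ∈ S₃) (h₂ : f₂ ∈ S₃)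
    (hind : LinearIndependent ℝ ![f₁, f₂]) :
    ∃ P : MvPolynomial (Fin 2) ℝ, P ≠ 0 ∧ ∀ a b : ℝ,
      MvPolynomial.eval ![a, b] P ≠ 0 →
      Module.finrank ℝ (Submodule.span ℝ {Lmap a b f₁, Lmap a b f₂}) = 2 := by
  obtain ⟨p56, hp56d⟩ : ∃ y : ℝ, y = f₁ 5 * f₂ 6 - f₁ 6 * f₂ 5 := ⟨_, rfl⟩
  obtain ⟨p57, hp57d⟩ : ∃ y : ℝ, y = f₁ 5 * f₂ 7 - f₁ 7 * f₂ 5 := ⟨_, rfl⟩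
  obtain ⟨p58, hp58d⟩ : ∃ y : ℝ, y = f₁ 5 * f₂ 8 - f₁ 8 * f₂ 5 := ⟨_, rfl⟩
  obtain ⟨p67, hp67d⟩ : ∃ y : ℝ, y = f₁ 6 * f₂ 7 - f₁ 7 * f₂ 6 := ⟨_, rfl⟩
  obtain ⟨p68, hp68d⟩ : ∃ y : ℝ, y = f₁ 6 * f₂ 8 - f₁ 8 * f₂ 6 := ⟨_, rfl⟩
  obtain ⟨p78, hp78d⟩ : ∃ y : ℝ, y = f₁ 7 * f₂ 8 - f₁ 8 * f₂ 7 := ⟨_, rfl⟩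
  -- low coordinates vanish
  have z10 : f₁ 0 = 0 := S3_low h₁ 0 (by decide)
  have z11 : f₁ 1 = 0 := S3_low h₁ 1 (by decide)
  have z12 : f₁ 2 = 0 := S3_low h₁ 2 (by decide)
  have z13 : f₁ 3 = 0 := S3_low h₁ 3 (by decide)
  have z14 : f₁ 4 = 0 := S3_low h₁ 4 (by decide)
  have z20 : f₂ 0 = 0 := S3_low h₂ 0 (by decide)
  have z21 : f₂ 1 = 0 := S3_low h₂ 1 (by decide)
  have z22 : f₂ 2 = 0 := S3_low h₂ 2 (by decide)
  have z23 : f₂ 3 = 0 := S3_low h₂ 3 (by decide)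
  have z24 : f₂ 4 = 0 := S3_low h₂ 4 (by decide)
  refine ⟨(quadP (6*p56) (6*p57) (2*p67))^2 + (quadP (2*p67) (6*p68) (6*p78))^2
      + (quadP (3*p57) (9*p58 + p67) (3*p68))^2, ?_, ?_⟩
  · -- P ≠ 0
    intro hP
    have hE : ∀ x y : ℝ,
        (6*p56*x^2 + 6*p57*(x*y) + 2*p67*y^2)^2
        + (2*p67*x^2 + 6*p68*(x*y) + 6*p78*y^2)^2
        + ((3*p57)*x^2 + (9*p58 + p67)*(x*y) + (3*p68)*y^2)^2 = 0 := by
      intro x y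
      have h := congrArg (MvPolynomial.eval ![x, y]) hP
      rw [P_eval, map_zero] at h
      linear_combination h
    clear hP
    have h10 : (6*p56)^2 + (2*p67)^2 + (3*p57)^2 = 0 := by linear_combination hE 1 0
    have h01 : (2*p67)^2 + (6*p78)^2 + (3*p68)^2 = 0 := by linear_combination hE 0 1
    obtain ⟨e56', e67', e57'⟩ := sq3 h10
    obtain ⟨-, e78', e68'⟩ := sq3 h01
    have e56 : p56 = 0 := by linarith
    have e57 : p57 = 0 := by linarith
    have e67 : p67 = 0 := by linarith
    have e68 : p68 = 0 := by linarith
    have e78 : p78 = 0 := by linarith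
    have e58 : p58 = 0 := by
      have h11 := hE 1 1
      rw [e56, e57, e67, e68, e78] at h11
      nlinarith [h11, sq_nonneg p58]
    -- deduce linear dependence, contradiction
    have hp56 : f₁ 5 * f₂ 6 - f₁ 6 * f₂ 5 = 0 := by rw [← hp56d]; exact e56
    have hp57 : f₁ 5 * f₂ 7 - f₁ 7 * f₂ 5 = 0 := by rw [← hp57d]; exact e57
    have hp58 : f₁ 5 * f₂ 8 - f₁ 8 * f₂ 5 = 0 := by rw [← hp58d]; exact e58
    have hp67 : f₁ 6 * f₂ 7 - f₁ 7 * f₂ 6 = 0 := by rw [← hp67d]; exact e67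
    have hp68 : f₁ 6 * f₂ 8 - f₁ 8 * f₂ 6 = 0 := by rw [← hp68d]; exact e68
    have hp78 : f₁ 7 * f₂ 8 - f₁ 8 * f₂ 7 = 0 := by rw [← hp78d]; exact e78
    have hne : f₁ ≠ 0 := by
      have := hind.ne_zero 0
      simpa using this
    have hhigh : f₁ 5 ≠ 0 ∨ f₁ 6 ≠ 0 ∨ f₁ 7 ≠ 0 ∨ f₁ 8 ≠ 0 := by
      by_contra hc
      push_neg at hc
      obtain ⟨a5, a6, a7, a8⟩ := hc
      apply hne
      funext j
      fin_cases j <;>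
        first
          | exact z10 | exact z11 | exact z12 | exact z13 | exact z14
          | exact a5 | exact a6 | exact a7 | exact a8
    have key : ∀ k : Fin 9, f₁ k ≠ 0 →
        (f₂ k) • f₁ + (-(f₁ k)) • f₂ = 0 → False := by
      intro k hk hrel
      have := (LinearIndependent.pair_iff.mp hind (f₂ k) (-(f₁ k)) hrel).2
      exact hk (by linarith [this])
    have rel : ∀ k : Fin 9, (f₂ k) • f₁ + (-(f₁ k)) • f₂ = 0 ↔
        ∀ j : Fin 9, f₂ k * f₁ j - f₁ k * f₂ j = 0 := by
      intro k
      constructor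
      · intro h j
        have := congrFun h j
        simp only [Pi.add_apply, Pi.smul_apply, smul_eq_mul, Pi.zero_apply, neg_mul] at this
        linarith [this]
      · intro h
        funext j
        simp only [Pi.add_apply, Pi.smul_apply, smul_eq_mul, Pi.zero_apply, neg_mul]
        linarith [h j]
    rcases hhigh with hk | hk | hk | hk
    · refine key 5 hk ((rel 5).mpr (fin9 ?_ ?_ ?_ ?_ ?_ ?_ ?_ ?_ ?_)) <;>
        first
          | (rw [z10, z20]; ring1) | (rw [z11, z21]; ring1) | (rw [z12, z22]; ring1)
          | (rw [z13, z23]; ring1) | (rw [z14, z24]; ring1)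
          | ring1
          | linear_combination -hp56 | linear_combination -hp57 | linear_combination -hp58
    · refine key 6 hk ((rel 6).mpr (fin9 ?_ ?_ ?_ ?_ ?_ ?_ ?_ ?_ ?_)) <;>
        first
          | (rw [z10, z20]; ring1) | (rw [z11, z21]; ring1) | (rw [z12, z22]; ring1)
          | (rw [z13, z23]; ring1) | (rw [z14, z24]; ring1)
          | ring1
          | linear_combination hp56 | linear_combination -hp67 | linear_combination -hp68
    · refine key 7 hk ((rel 7).mpr (fin9 ?_ ?_ ?_ ?_ ?_ ?_ ?_ ?_ ?_)) <;>
        first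
          | (rw [z10, z20]; ring1) | (rw [z11, z21]; ring1) | (rw [z12, z22]; ring1)
          | (rw [z13, z23]; ring1) | (rw [z14, z24]; ring1)
          | ring1
          | linear_combination hp57 | linear_combination hp67 | linear_combination -hp78
    · refine key 8 hk ((rel 8).mpr (fin9 ?_ ?_ ?_ ?_ ?_ ?_ ?_ ?_ ?_)) <;>
        first
          | (rw [z10, z20]; ring1) | (rw [z11, z21]; ring1) | (rw [z12, z22]; ring1)
          | (rw [z13, z23]; ring1) | (rw [z14, z24]; ring1)
          | ring1
          | linear_combination hp58 | linear_combination hp68 | linear_combination hp78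
  · -- main direction
    intro a b hval
    have hE : (6*p56*a^2 + 6*p57*(a*b) + 2*p67*b^2)^2
        + (2*p67*a^2 + 6*p68*(a*b) + 6*p78*b^2)^2
        + ((3*p57)*a^2 + (9*p58 + p67)*(a*b) + (3*p68)*b^2)^2 ≠ 0 := by
      intro h
      apply hval
      rw [P_eval]
      linear_combination h
    have hor : (6*p56*a^2 + 6*p57*(a*b) + 2*p67*b^2) ≠ 0
        ∨ (2*p67*a^2 + 6*p68*(a*b) + 6*p78*b^2) ≠ 0
        ∨ ((3*p57)*a^2 + (9*p58 + p67)*(a*b) + (3*p68)*b^2) ≠ 0 := by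
      by_contra hc
      push_neg at hc
      obtain ⟨e1, e2, e3⟩ := hc
      exact hE (by rw [e1, e2, e3]; ring1)
    set u := Lmap a b f₁ with hu
    set v := Lmap a b f₂ with hv
    have hu2 : u 2 = 3*a*f₁ 5 + b*f₁ 6 := Lrow2 a b f₁ z12
    have hu3 : u 3 = 2*a*f₁ 6 + 2*b*f₁ 7 := Lrow3 a b f₁ z13
    have hu4 : u 4 = a*f₁ 7 + 3*b*f₁ 8 := Lrow4 a b f₁ z14
    have hv2 : v 2 = 3*a*f₂ 5 + b*f₂ 6 := Lrow2 a b f₂ z22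
    have hv3 : v 3 = 2*a*f₂ 6 + 2*b*f₂ 7 := Lrow3 a b f₂ z23
    have hv4 : v 4 = a*f₂ 7 + 3*b*f₂ 8 := Lrow4 a b f₂ z24
    have hli : LinearIndependent ℝ ![u, v] := by
      rcases hor with h | h | h
      · refine pair_indep 2 3 ?_
        rw [hu2, hu3, hv2, hv3]
        intro hc
        apply h
        rw [hp56d, hp57d, hp67d]
        linear_combination hc
      · refine pair_indep 3 4 ?_
        rw [hu3, hu4, hv3, hv4]
        intro hc
        apply h
        rw [hp67d, hp68d, hp78d]
        linear_combination hc
      · refine pair_indep 2 4 ?_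
        rw [hu2, hu4, hv2, hv4]
        intro hc
        apply h
        rw [hp57d, hp58d, hp67d, hp68d]
        linear_combination hc
    have hset : ({u, v} : Set (Fin 5 → ℝ)) = Set.range ![u, v] := by
      rw [Set.pair_comm]
      simp [Matrix.range_cons, Matrix.range_empty]
    rw [hset, finrank_span_eq_card hli, Fintype.card_fin]
end

section
/- Fix a nonzero polynomial $f\in S_1\oplus S_2$ (span of $r,s,r^2,rs,s^2$). Then for almost every $\xi\in\mathbb{R}^2$, the subspace $\pi_{1,2}P_\xi(S_3)+\mathrm{span}(f)$ of $S_1\oplus S_2$ has dimension $4$. -/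
open Matrix

set_option maxHeartbeats 1000000

theorem stmt1 (f : Fin 5 → ℝ) (hf : f ≠ 0) :
    ∃ P : MvPolynomial (Fin 2) ℝ, P ≠ 0 ∧ ∀ a b : ℝ,
      MvPolynomial.eval ![a, b] P ≠ 0 →
      Module.finrank ℝ ↥(Submodule.map (Lmap a b) S₃ ⊔ Submodule.span ℝ {f}) = 4 := by

  classical
  refine ⟨MvPolynomial.X 0 *
    ((MvPolynomial.C (2*f 0) + MvPolynomial.C (2*f 2) * MvPolynomial.X 0
        + MvPolynomial.C (f 3) * MvPolynomial.X 1)^2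
      + (MvPolynomial.C (2*f 1) + MvPolynomial.C (f 3) * MvPolynomial.X 0
        + MvPolynomial.C (2*f 4) * MvPolynomial.X 1)^2), ?_, ?_⟩
  · -- nonzeroness
    intro hP
    have e : ∀ a b : ℝ, a * ((2*f 0 + 2*f 2*a + f 3*b)^2 + (2*f 1 + f 3*a + 2*f 4*b)^2) = 0 := by
      intro a b
      have := congrArg (MvPolynomial.eval ![a, b]) hP
      simpa using this
    have e1 := e 1 0
    have e2 := e 2 0
    have e3 := e 1 1
    norm_num at e1 e2 e3
    have h1 : 2*f 0 + 2*f 2 = 0 := by nlinarith [sq_nonneg (2*f 0 + 2*f 2), sq_nonneg (2*f 1 + f 3)]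
    have h2 : 2*f 1 + f 3 = 0 := by nlinarith [sq_nonneg (2*f 0 + 2*f 2), sq_nonneg (2*f 1 + f 3)]
    have h3 : 2*f 0 + 2*f 2*2 = 0 := by
      nlinarith [sq_nonneg (2*f 0 + 2*f 2*2), sq_nonneg (2*f 1 + f 3*2)]
    have h4 : 2*f 1 + f 3*2 = 0 := by
      nlinarith [sq_nonneg (2*f 0 + 2*f 2*2), sq_nonneg (2*f 1 + f 3*2)]
    have h5 : 2*f 0 + 2*f 2 + f 3 = 0 := by
      nlinarith [sq_nonneg (2*f 0 + 2*f 2 + f 3), sq_nonneg (2*f 1 + f 3 + 2*f 4)]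
    have h6 : 2*f 1 + f 3 + 2*f 4 = 0 := by
      nlinarith [sq_nonneg (2*f 0 + 2*f 2 + f 3), sq_nonneg (2*f 1 + f 3 + 2*f 4)]
    apply hf
    funext i
    fin_cases i <;> simp <;> linarith
  · intro a b h
    -- extract a ≠ 0 and q1 ≠ 0 ∨ q2 ≠ 0
    have heval : (MvPolynomial.eval ![a, b])
        (MvPolynomial.X 0 *
          ((MvPolynomial.C (2*f 0) + MvPolynomial.C (2*f 2) * MvPolynomial.X 0
              + MvPolynomial.C (f 3) * MvPolynomial.X 1)^2
            + (MvPolynomial.C (2*f 1) + MvPolynomial.C (f 3) * MvPolynomial.X 0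
              + MvPolynomial.C (2*f 4) * MvPolynomial.X 1)^2)) =
        a * ((2*f 0 + 2*f 2*a + f 3*b)^2 + (2*f 1 + f 3*a + 2*f 4*b)^2) := by
      simp
    rw [heval] at h
    have ha : a ≠ 0 := fun h0 => h (by rw [h0]; ring)
    have hq : (2*f 0 + 2*f 2*a + f 3*b) ≠ 0 ∨ (2*f 1 + f 3*a + 2*f 4*b) ≠ 0 := by
      by_contra hc
      push_neg at hc
      apply h
      rw [hc.1, hc.2]; ring
    set v5 : Fin 5 → ℝ := ![-3*a^2, 0, 3*a, 0, 0] with hv5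
    set v6 : Fin 5 → ℝ := ![-2*a*b, -a^2, b, 2*a, 0] with hv6
    set v7 : Fin 5 → ℝ := ![-b^2, -2*a*b, 0, 2*b, a] with hv7
    set v8 : Fin 5 → ℝ := ![0, -3*b^2, 0, 0, 3*b] with hv8
    have hmap : Submodule.map (Lmap a b) S₃ = Submodule.span ℝ {v5, v6, v7, v8} := by
      rw [S₃, Submodule.map_span]
      congr 1
      rw [Set.image_insert_eq, Set.image_insert_eq, Set.image_insert_eq, Set.image_singleton]
      have h5 : Lmap a b (Pi.single 5 1) = v5 := by
        ext i; fin_cases i <;> simp [Lmap, Matrix.mulVecLin_apply, Matrix.mulVec_single, Lmat, hv5] <;> rfl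
      have h6 : Lmap a b (Pi.single 6 1) = v6 := by
        ext i; fin_cases i <;> simp [Lmap, Matrix.mulVecLin_apply, Matrix.mulVec_single, Lmat, hv6] <;> rfl
      have h7 : Lmap a b (Pi.single 7 1) = v7 := by
        ext i; fin_cases i <;> simp [Lmap, Matrix.mulVecLin_apply, Matrix.mulVec_single, Lmat, hv7] <;> rfl
      have h8 : Lmap a b (Pi.single 8 1) = v8 := by
        ext i; fin_cases i <;> simp [Lmap, Matrix.mulVecLin_apply, Matrix.mulVec_single, Lmat, hv8] <;> rfl
      rw [h5, h6, h7, h8]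
    -- v8 is in the span of the others
    have hv8mem : v8 ∈ Submodule.span ℝ {v5, v6, v7} := by
      have hrel : (a^3) • v8 = (b^3) • v5 + (-(3*a*b^2)) • v6 + (3*a^2*b) • v7 := by
        rw [hv5, hv6, hv7, hv8]
        funext i
        fin_cases i <;> simp <;> ring
      have h8 : v8 = (a^3)⁻¹ • ((b^3) • v5 + (-(3*a*b^2)) • v6 + (3*a^2*b) • v7) := by
        rw [← hrel, smul_smul, inv_mul_cancel₀ (pow_ne_zero 3 ha), one_smul]
      rw [h8]
      refine Submodule.smul_mem _ _ (Submodule.add_mem _ (Submodule.add_mem _ ?_ ?_) ?_) <;>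
        exact Submodule.smul_mem _ _ (Submodule.subset_span (by simp))
    have hsetz : ({v5, v6, v7, v8} : Set (Fin 5 → ℝ)) = insert v8 {v5, v6, v7} := by
      ext x; simp; tauto
    have hspan : Submodule.span ℝ {v5, v6, v7, v8} = Submodule.span ℝ {v5, v6, v7} := by
      rw [hsetz, Submodule.span_insert_eq_span hv8mem]
    -- linear independence of v5 v6 v7
    have hli : LinearIndependent ℝ ![v5, v6, v7] := by
      rw [Fintype.linearIndependent_iff]
      intro g hg
      have h4 := congrFun hg 4
      have h3 := congrFun hg 3
      have h2 := congrFun hg 2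
      simp [Fin.sum_univ_three, hv5, hv6, hv7] at h4 h3 h2
      have hg2 : g 2 = 0 := h4.resolve_right ha
      have hg1 : g 1 = 0 := by
        rw [hg2] at h3
        have : g 1 * (2*a) = 0 := by linarith
        rcases mul_eq_zero.mp this with h | h
        · exact h
        · exact absurd h (by simp [ha])
      have hg0 : g 0 = 0 := by
        rw [hg1] at h2
        have : g 0 * (3*a) = 0 := by linarith
        rcases mul_eq_zero.mp this with h | h
        · exact h
        · exact absurd h (by simp [ha])
      intro i; fin_cases i <;> assumption
    have hrange : Set.range ![v5, v6, v7] = {v5, v6, v7} := by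
      ext x
      simp [Fin.exists_fin_succ, Matrix.range_cons, Matrix.range_empty]
      tauto
    have hfr : Module.finrank ℝ (Submodule.span ℝ ({v5, v6, v7} : Set (Fin 5 → ℝ))) = 3 := by
      rw [← hrange]
      rw [finrank_span_eq_card hli]
      simp
    -- f not in the span
    have hnot : f ∉ Submodule.span ℝ ({v5, v6, v7} : Set (Fin 5 → ℝ)) := by
      rcases hq with hq1 | hq2
      · set φ : (Fin 5 → ℝ) →ₗ[ℝ] ℝ :=
          { toFun := fun x => 2*x 0 + 2*a*x 2 + b*x 3
            map_add' := fun x y => by simp [Pi.add_apply]; ring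
            map_smul' := fun c x => by simp [Pi.smul_apply]; ring } with hφ
        intro hmem
        have hker : Submodule.span ℝ ({v5, v6, v7} : Set (Fin 5 → ℝ)) ≤ LinearMap.ker φ := by
          rw [Submodule.span_le]
          rintro x (rfl | rfl | rfl) <;>
            simp [hφ, LinearMap.mem_ker, hv5, hv6, hv7] <;> ring
        have := hker hmem
        rw [LinearMap.mem_ker] at this
        apply hq1
        simp [hφ] at this
        linarith
      · set φ : (Fin 5 → ℝ) →ₗ[ℝ] ℝ :=
          { toFun := fun x => 2*x 1 + a*x 3 + 2*b*x 4
            map_add' := fun x y => by simp [Pi.add_apply]; ring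
            map_smul' := fun c x => by simp [Pi.smul_apply]; ring } with hφ
        intro hmem
        have hker : Submodule.span ℝ ({v5, v6, v7} : Set (Fin 5 → ℝ)) ≤ LinearMap.ker φ := by
          rw [Submodule.span_le]
          rintro x (rfl | rfl | rfl) <;>
            simp [hφ, LinearMap.mem_ker, hv5, hv6, hv7] <;> ring
        have := hker hmem
        rw [LinearMap.mem_ker] at this
        apply hq2
        simp [hφ] at this
        linarith
    -- disjointness
    have hinf : Submodule.span ℝ ({v5, v6, v7} : Set (Fin 5 → ℝ)) ⊓ Submodule.span ℝ {f} = ⊥ := by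
      rw [eq_bot_iff]
      rintro x hx
      rw [Submodule.mem_inf] at hx
      obtain ⟨hx1, hx2⟩ := hx
      rw [Submodule.mem_span_singleton] at hx2
      obtain ⟨c, rfl⟩ := hx2
      rcases eq_or_ne c 0 with rfl | hc
      · simp
      · exfalso
        apply hnot
        have : f = c⁻¹ • (c • f) := by rw [smul_smul, inv_mul_cancel₀ hc, one_smul]
        rw [this]
        exact Submodule.smul_mem _ _ hx1
    have hfin := Submodule.finrank_sup_add_finrank_inf_eq
      (Submodule.span ℝ ({v5, v6, v7} : Set (Fin 5 → ℝ))) (Submodule.span ℝ {f})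
    rw [hinf, finrank_bot, hfr, finrank_span_singleton hf] at hfin
    rw [hmap, hspan]
    omega
end

section
/- Fix three linearly independent polynomials $f,g,h\in S_1\oplus S_2$. Then for almost every $\xi\in\mathbb{R}^2$, the subspace $\pi_{1,2}P_\xi(S_3)+\mathrm{span}(f,g,h)$ of the five-dimensional space $S_1\oplus S_2$ has dimension $5$, i.e. equals $S_1\oplus S_2$. -/
open Matrix

/-!
Let `ω(u, v) = det [u; v; f; g; h]`, an alternating form on `ℝ⁵`; it is nonzero because
`f, g, h` extend to a basis, and whenever `ω(u, v) ≠ 0` for `u, v` in the image of `S₃` the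
sum is everything. The images of the four cubic monomials depend polynomially on `(a, b)`, and
if `ω` vanished on every pair of them for every `(a, b)`, ten evaluations would give a
full-rank linear system killing all ten coordinates `ω(eₖ, eₗ)`. Hence one such minor is a
nonzero polynomial in `(a, b)`, and off its zero set the sum is the whole space.
-/

theorem exists_notMem_span_range {K V : Type*} [Field K] [AddCommGroup V] [Module K V]
    [FiniteDimensional K V] {m : ℕ} (v : Fin m → V) (hm : m < Module.finrank K V) :
    ∃ x, x ∉ Submodule.span K (Set.range v) := by
  by_contra! h
  have htop : Submodule.span K (Set.range v) = ⊤ := eq_top_iff.mpr fun x _ => h x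
  have := finrank_range_le_card (R := K) v
  rw [Set.finrank, htop, finrank_top, Fintype.card_fin] at this
  omega

section DetForm

variable {K : Type*} [Field K] {n : ℕ}

def detForm (w : Fin n → Fin (n + 2) → K) : LinearMap.BilinForm K (Fin (n + 2) → K) :=
  LinearMap.mk₂ K (fun u v => (of (vecCons u (vecCons v w))).det)
    (fun u u' _ => detRowAlternating.map_vecCons_add _ u u')
    (fun c u _ => detRowAlternating.map_vecCons_smul _ c u)
    (fun u v v' => (detRowAlternating.curryLeft u).map_vecCons_add _ v v')
    (fun c u v => (detRowAlternating.curryLeft u).map_vecCons_smul _ c v)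

variable (w : Fin n → Fin (n + 2) → K)

@[simp]
theorem detForm_apply (u v : Fin (n + 2) → K) :
    detForm w u v = (of (vecCons u (vecCons v w))).det := rfl

theorem isAlt_detForm : (detForm w).IsAlt := fun _ =>
  det_zero_of_row_eq (i := 0) (j := 1) Fin.zero_ne_one rfl

theorem detForm_ne_zero (hw : LinearIndependent K w) : detForm w ≠ 0 := by
  obtain ⟨x, hx⟩ := exists_notMem_span_range (K := K) w (by simp)
  obtain ⟨y, hy⟩ := exists_notMem_span_range (K := K) (vecCons x w) (by simp)
  have hli : LinearIndependent K (vecCons y (vecCons x w)) :=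
    linearIndependent_finCons.mpr ⟨linearIndependent_finCons.mpr ⟨hw, hx⟩, hy⟩
  have hdet : detForm w y x ≠ 0 := by
    rw [detForm_apply, ← isUnit_iff_ne_zero, ← isUnit_iff_isUnit_det]
    exact linearIndependent_rows_iff_isUnit.mp hli
  exact fun h0 => hdet (by simp [h0])

theorem sup_span_eq_top_of_detForm_ne_zero {U : Submodule K (Fin (n + 2) → K)}
    {u v : Fin (n + 2) → K} (hu : u ∈ U) (hv : v ∈ U) (h : detForm w u v ≠ 0) :
    U ⊔ Submodule.span K (Set.range w) = ⊤ := by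
  have hli : LinearIndependent K (vecCons u (vecCons v w)) := by
    rw [detForm_apply, ← isUnit_iff_ne_zero, ← isUnit_iff_isUnit_det] at h
    exact linearIndependent_rows_iff_isUnit.mpr h
  rw [eq_top_iff, ← hli.span_eq_top_of_card_eq_finrank (by simp), Submodule.span_le,
    range_cons, range_cons]
  refine Set.union_subset ?_ (Set.union_subset ?_ ?_)
  · simpa using Submodule.mem_sup_left hu
  · simpa using Submodule.mem_sup_left hv
  · exact Submodule.subset_span.trans (SetLike.coe_subset_coe.mpr le_sup_right)

end DetForm

/-- Row `j` is `Lmap a b` applied to the `j`-th cubic monomial; stated over any commutative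
ring so that `a, b` can be polynomial variables. -/
def cubicImage {R : Type*} [CommRing R] (a b : R) : Fin 4 → Fin 5 → R :=
  ![![-3 * a ^ 2, 0, 3 * a, 0, 0],
    ![-2 * a * b, -a ^ 2, b, 2 * a, 0],
    ![-b ^ 2, -2 * a * b, 0, 2 * b, a],
    ![0, -3 * b ^ 2, 0, 0, 3 * b]]

theorem map_cubicImage {R S : Type*} [CommRing R] [CommRing S] (φ : R →+* S) (a b : R)
    (i : Fin 4) :
    (fun l => φ (cubicImage a b i l)) = cubicImage (φ a) (φ b) i := by
  ext l; fin_cases i <;> fin_cases l <;> simp [cubicImage, map_ofNat]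

theorem cubicImage_mem_map_S₃ (a b : ℝ) (j : Fin 4) :
    cubicImage a b j ∈ Submodule.map (Lmap a b) S₃ := by
  refine ⟨Pi.single (Fin.natAdd 5 j) 1, Submodule.subset_span ?_, ?_⟩
  · fin_cases j <;> simp
  · ext i; fin_cases j <;> fin_cases i <;> simp [Lmap, Lmat, cubicImage]

theorem LinearMap.BilinForm.IsAlt.eq_zero_of_forall_cubicImage
    {ω : LinearMap.BilinForm ℝ (Fin 5 → ℝ)} (hω : ω.IsAlt)
    (h : ∀ a b i j, ω (cubicImage a b i) (cubicImage a b j) = 0) : ω = 0 := by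
  set c := LinearMap.toMatrix₂' ℝ ω
  have hexp : ∀ x y, ω x y = ∑ k, ∑ l, x k * y l * c k l := fun x y => by
    rw [← Matrix.toLinearMap₂'_toMatrix' (R := ℝ) ω, Matrix.toLinearMap₂'_apply]
    simp [c, smul_eq_mul, mul_assoc]
  have hdiag : ∀ k, c k k = 0 := fun k => by
    simp only [c, LinearMap.toMatrix₂'_apply, hω.self_eq_zero]
  have hanti : ∀ k l, k < l → c l k = -c k l := fun k l _ => by
    simp only [c, LinearMap.toMatrix₂'_apply, LinearMap.IsAlt.neg hω]
  have hsum : ∀ a b i j, ∑ k, ∑ l, cubicImage a b i k * cubicImage a b j l * c k l = 0 :=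
    fun a b i j => (hexp _ _).symm.trans (h a b i j)
  -- a full-rank system in the coordinates `c k l`, `k < l`
  have e1 := hsum 1 0 0 1
  have e2 := hsum 1 0 0 2
  have e3 := hsum 1 0 1 2
  have e4 := hsum 0 1 1 2
  have e5 := hsum 0 1 1 3
  have e6 := hsum 0 1 2 3
  have e7 := hsum 1 1 0 1
  have e8 := hsum 1 1 0 2
  have e9 := hsum 1 1 1 2
  have e10 := hsum 1 (-1) 1 2
  simp [Fin.sum_univ_five, cubicImage, hdiag, hanti] at e1 e2 e3 e4 e5 e6 e7 e8 e9 e10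
  have hc : c = 0 := by
    clear_value c
    ext k l
    fin_cases k <;> fin_cases l <;> simp [hdiag, hanti] <;> linarith
  exact (LinearMap.toMatrix₂' ℝ).map_eq_zero_iff.mp hc

open MvPolynomial in
noncomputable def cubicMinor (i j : Fin 4) (w : Fin 3 → Fin 5 → ℝ) :
    MvPolynomial (Fin 2) ℝ :=
  (of (vecCons (cubicImage (X 0) (X 1) i) (vecCons (cubicImage (X 0) (X 1) j)
    fun k l => C (w k l)))).det

open MvPolynomial in
theorem eval_cubicMinor (i j : Fin 4) (w : Fin 3 → Fin 5 → ℝ) (a b : ℝ) :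
    eval ![a, b] (cubicMinor i j w) = detForm w (cubicImage a b i) (cubicImage a b j) := by
  rw [cubicMinor, RingHom.map_det, detForm_apply]
  congr 1
  ext k l
  refine Fin.cases ?_ (Fin.cases ?_ fun k => ?_) k
  · simpa using congr_fun (map_cubicImage (eval ![a, b]) (X 0) (X 1) i) l
  · simpa using congr_fun (map_cubicImage (eval ![a, b]) (X 0) (X 1) j) l
  · simp

theorem stmt2 (f g h : Fin 5 → ℝ) (hind : LinearIndependent ℝ ![f, g, h]) :
    ∃ P : MvPolynomial (Fin 2) ℝ, P ≠ 0 ∧ ∀ a b : ℝ,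
      MvPolynomial.eval ![a, b] P ≠ 0 →
      Module.finrank ℝ ↥(Submodule.map (Lmap a b) S₃ ⊔ Submodule.span ℝ {f, g, h}) = 5 := by
  obtain ⟨a₀, b₀, i, j, h₀⟩ :
      ∃ a b i j, detForm ![f, g, h] (cubicImage a b i) (cubicImage a b j) ≠ 0 := by
    by_contra! H
    exact detForm_ne_zero _ hind ((isAlt_detForm _).eq_zero_of_forall_cubicImage H)
  refine ⟨cubicMinor i j ![f, g, h], fun hP => h₀ ?_, fun a b hab => ?_⟩
  · rw [← eval_cubicMinor, hP, map_zero]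
  rw [eval_cubicMinor] at hab
  have htop := sup_span_eq_top_of_detForm_ne_zero _ (cubicImage_mem_map_S₃ a b i)
    (cubicImage_mem_map_S₃ a b j) hab
  rw [range_cons, range_cons_cons_empty, Set.singleton_union] at htop
  rw [htop, finrank_top, Module.finrank_fin_fun]
end

section
/- For $\xi=(a,b)$ with $a\neq 0$ and $b\neq 0$, the image $\pi_{1,2}P_\xi(S_3)$ is the three-dimensional subspace of $S_1\oplus S_2$ (with coordinates in the basis $r,s,r^2,rs,s^2$) spanned by the vectors $(a,0,-1,0,0)$, $(0,b,0,0,-1)$, $(-b,-a,0,2,0)$. -/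
open Matrix

theorem stmt3 (a b : ℝ) (ha : a ≠ 0) (hb : b ≠ 0) :
    Submodule.map (Lmap a b) S₃ =
      Submodule.span ℝ {![a, 0, -1, 0, 0], ![0, b, 0, 0, -1], ![-b, -a, 0, 2, 0]} ∧
    Module.finrank ℝ (Submodule.map (Lmap a b) S₃) = 3 := by
  set v1 : Fin 5 → ℝ := ![a, 0, -1, 0, 0] with hv1
  set v2 : Fin 5 → ℝ := ![0, b, 0, 0, -1] with hv2
  set v3 : Fin 5 → ℝ := ![-b, -a, 0, 2, 0] with hv3
  have h5 : Lmap a b (Pi.single (5:Fin 9) 1) = (-3*a) • v1 := by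
    funext i; fin_cases i <;> simp [Lmap, Lmat, hv1] <;> ring_nf <;> rfl
  have h6 : Lmap a b (Pi.single (6:Fin 9) 1) = (-b) • v1 + a • v3 := by
    funext i; fin_cases i <;> simp [Lmap, Lmat, hv1, hv3] <;> ring_nf <;> rfl
  have h7 : Lmap a b (Pi.single (7:Fin 9) 1) = (-a) • v2 + b • v3 := by
    funext i; fin_cases i <;> simp [Lmap, Lmat, hv2, hv3] <;> ring_nf <;> rfl
  have h8 : Lmap a b (Pi.single (8:Fin 9) 1) = (-3*b) • v2 := by
    funext i; fin_cases i <;> simp [Lmap, Lmat, hv2] <;> ring_nf <;> rfl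
  have hmap : Submodule.map (Lmap a b) S₃ =
      Submodule.span ℝ {Lmap a b (Pi.single (5:Fin 9) 1), Lmap a b (Pi.single 6 1),
        Lmap a b (Pi.single 7 1), Lmap a b (Pi.single 8 1)} := by
    rw [S₃, Submodule.map_span]
    congr 1
    simp [Set.image_insert_eq]
  have hv1mem : v1 ∈ Submodule.span ℝ ({v1, v2, v3} : Set (Fin 5 → ℝ)) :=
    Submodule.subset_span (by simp)
  have hv2mem : v2 ∈ Submodule.span ℝ ({v1, v2, v3} : Set (Fin 5 → ℝ)) :=
    Submodule.subset_span (by simp)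
  have hv3mem : v3 ∈ Submodule.span ℝ ({v1, v2, v3} : Set (Fin 5 → ℝ)) :=
    Submodule.subset_span (by simp)
  have hspan : Submodule.map (Lmap a b) S₃ = Submodule.span ℝ ({v1, v2, v3} : Set (Fin 5 → ℝ)) := by
    rw [hmap]
    apply le_antisymm
    · rw [Submodule.span_le]
      intro x hx
      simp only [Set.mem_insert_iff, Set.mem_singleton_iff] at hx
      rcases hx with h | h | h | h <;> subst h
      · rw [h5]; exact Submodule.smul_mem _ _ hv1mem
      · rw [h6]; exact Submodule.add_mem _ (Submodule.smul_mem _ _ hv1mem) (Submodule.smul_mem _ _ hv3mem)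
      · rw [h7]; exact Submodule.add_mem _ (Submodule.smul_mem _ _ hv2mem) (Submodule.smul_mem _ _ hv3mem)
      · rw [h8]; exact Submodule.smul_mem _ _ hv2mem
    · rw [Submodule.span_le]
      have w5 : Lmap a b (Pi.single (5:Fin 9) 1) ∈ Submodule.span ℝ
          ({Lmap a b (Pi.single (5:Fin 9) 1), Lmap a b (Pi.single 6 1),
            Lmap a b (Pi.single 7 1), Lmap a b (Pi.single 8 1)} : Set (Fin 5 → ℝ)) :=
        Submodule.subset_span (by simp)
      have w6 : Lmap a b (Pi.single (6:Fin 9) 1) ∈ Submodule.span ℝ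
          ({Lmap a b (Pi.single (5:Fin 9) 1), Lmap a b (Pi.single 6 1),
            Lmap a b (Pi.single 7 1), Lmap a b (Pi.single 8 1)} : Set (Fin 5 → ℝ)) :=
        Submodule.subset_span (by simp)
      have w7 : Lmap a b (Pi.single (7:Fin 9) 1) ∈ Submodule.span ℝ
          ({Lmap a b (Pi.single (5:Fin 9) 1), Lmap a b (Pi.single 6 1),
            Lmap a b (Pi.single 7 1), Lmap a b (Pi.single 8 1)} : Set (Fin 5 → ℝ)) :=
        Submodule.subset_span (by simp)
      have w8 : Lmap a b (Pi.single (8:Fin 9) 1) ∈ Submodule.span ℝ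
          ({Lmap a b (Pi.single (5:Fin 9) 1), Lmap a b (Pi.single 6 1),
            Lmap a b (Pi.single 7 1), Lmap a b (Pi.single 8 1)} : Set (Fin 5 → ℝ)) :=
        Submodule.subset_span (by simp)
      have e1 : v1 = (-3*a)⁻¹ • Lmap a b (Pi.single (5:Fin 9) 1) := by
        rw [h5, smul_smul, inv_mul_cancel₀ (by intro h; apply ha; linarith), one_smul]
      have e2 : v2 = (-3*b)⁻¹ • Lmap a b (Pi.single (8:Fin 9) 1) := by
        rw [h8, smul_smul, inv_mul_cancel₀ (by intro h; apply hb; linarith), one_smul]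
      have e3 : v3 = a⁻¹ • Lmap a b (Pi.single (6:Fin 9) 1)
          - (b/(3*a^2)) • Lmap a b (Pi.single (5:Fin 9) 1) := by
        rw [h5, h6]
        funext i; fin_cases i <;> simp [hv1, hv3] <;> field_simp <;> ring
      intro x hx
      simp only [Set.mem_insert_iff, Set.mem_singleton_iff] at hx
      rcases hx with h | h | h <;> subst h
      · rw [e1]; exact Submodule.smul_mem _ _ w5
      · rw [e2]; exact Submodule.smul_mem _ _ w8
      · rw [e3]; exact Submodule.sub_mem _ (Submodule.smul_mem _ _ w6) (Submodule.smul_mem _ _ w5)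
  refine ⟨hspan, ?_⟩
  rw [hspan]
  have hrange : Set.range ![v1, v2, v3] = ({v1, v2, v3} : Set (Fin 5 → ℝ)) := by
    simp only [Matrix.range_cons, Matrix.range_empty, Set.union_empty]
    ext x; simp; tauto
  have hind : LinearIndependent ℝ ![v1, v2, v3] := by
    rw [Fintype.linearIndependent_iff]
    intro g hg
    have h2 := congrFun hg 2
    have h3 := congrFun hg 3
    have h4 := congrFun hg 4
    simp [Fin.sum_univ_succ, hv1, hv2, hv3] at h2 h3 h4
    intro i; fin_cases i <;> simp <;> linarith
  rw [← hrange, finrank_span_eq_card hind]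
  simp
end

section
/- Let $V$ be a linear subspace of $S=S_1\oplus S_2\oplus S_3$ with $\dim V=6$. Then for almost every $\xi\in\mathbb{R}^2$, $\dim(\pi_{1,2}P_\xi(V))\ge 4$. -/
/-!
Write `V = ker W` for a `3 × 9` matrix `W` of rank `3`. The kernel of `π_{1,2} P_ξ` is the image of
an injective matrix `K(ξ)`, so `dim π_{1,2} P_ξ(V) = 6 - dim ker (W K(ξ)) = 2 + rank (W K(ξ))`.
The entries of `W K(ξ)` are polynomials in `ξ`, so it suffices that some `2 × 2` minor of
`W K(ξ)` is a nonzero polynomial. If every minor from the first two rows `u, v` of `W` vanished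
identically, the coefficients of these minors would force all Plücker coordinates
`u m v n - u n v m` to vanish, i.e. the rows `u` and `v` would be proportional.
-/

open Matrix

open Module MvPolynomial

theorem Submodule.finrank_map_add_finrank_comap_of_range_eq_ker {K M N P : Type*} [Field K]
    [AddCommGroup M] [Module K M] [FiniteDimensional K M] [AddCommGroup N] [Module K N]
    [AddCommGroup P] [Module K P] {f : M →ₗ[K] N} {g : P →ₗ[K] M} (hg : Function.Injective g)
    (hfg : LinearMap.range g = LinearMap.ker f) (V : Submodule K M) :
    finrank K (V.map f) + finrank K (V.comap g) = finrank K V := by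
  have hker : finrank K (LinearMap.ker (f.domRestrict V)) = finrank K (V.comap g) := by
    rw [LinearMap.ker_domRestrict, ← Submodule.finrank_map_subtype_eq,
      Submodule.map_comap_subtype, ← hfg, inf_comm, ← Submodule.map_comap_eq]
    exact (Submodule.equivMapOfInjective g hg _).finrank_eq.symm
  rw [← hker, ← LinearMap.range_domRestrict, LinearMap.finrank_range_add_finrank_ker]

theorem Matrix.card_le_rank_of_det_submatrix_ne_zero {K m n o : Type*} [Field K] [Fintype n]
    [Fintype o] [DecidableEq o] (A : Matrix m n K) (r : o → m) (c : o → n)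
    (h : (A.submatrix r c).det ≠ 0) : Fintype.card o ≤ A.rank :=
  (rank_of_det_ne_zero h).symm.le.trans (A.rank_submatrix_le r c)

theorem exists_linearIndependent_rows_ker_eq {K : Type*} [Field K] {n c : ℕ}
    (V : Submodule K (Fin n → K)) (hV : finrank K V + c = n) :
    ∃ W : Matrix (Fin c) (Fin n) K, LinearIndependent K W.row ∧ LinearMap.ker W.mulVecLin = V := by
  have hq : finrank K ((Fin n → K) ⧸ V) = finrank K (Fin c → K) := by
    have := V.finrank_quotient_add_finrank
    simp only [finrank_fin_fun] at this ⊢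
    omega
  let T := (LinearEquiv.ofFinrankEq _ _ hq).toLinearMap ∘ₗ V.mkQ
  have hT : Function.Surjective T := (LinearEquiv.surjective _).comp V.mkQ_surjective
  have hW : (LinearMap.toMatrix' T).mulVecLin = T := Matrix.toLin'_toMatrix' T
  refine ⟨LinearMap.toMatrix' T, ?_, ?_⟩
  · rw [linearIndependent_iff_card_eq_finrank_span]
    unfold Set.finrank
    rw [← rank_eq_finrank_span_row, rank, hW, LinearMap.range_eq_top.mpr hT, finrank_top,
      finrank_fin_fun, Fintype.card_fin]
  · simp [hW, T, LinearMap.ker_comp]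

theorem LinearIndependent.exists_mul_ne_mul {K ι κ : Type*} [Field K] {w : κ → ι → K}
    (h : LinearIndependent K w) {i j : κ} (hij : i ≠ j) : ∃ m n, w i m * w j n ≠ w i n * w j m := by
  by_contra! hw
  obtain ⟨m, hm⟩ : ∃ m, w i m ≠ 0 := by
    by_contra! hi
    exact h.ne_zero i (funext hi)
  have hdep : w j m • w i + (-w i m) • w j = 0 := by
    ext n
    simp only [Pi.add_apply, Pi.smul_apply, smul_eq_mul, Pi.zero_apply]
    linear_combination hw n m
  have hpair := (LinearIndepOn.pair_iff w hij).mp (h.linearIndepOn _)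
  exact hm (neg_eq_zero.mp (hpair _ _ hdep).2)

/-- Column `k` is `(r - X₀) ^ (3 - k) * (s - X₁) ^ k` minus its constant term, in the monomial basis
`r, s, r², rs, s², r³, r²s, rs², s³` used by `Lmat`. -/
noncomputable def Kpoly : Matrix (Fin 9) (Fin 4) (MvPolynomial (Fin 2) ℝ) :=
  !![3 * X 0 ^ 2, 2 * X 0 * X 1, X 1 ^ 2, 0;
     0, X 0 ^ 2, 2 * X 0 * X 1, 3 * X 1 ^ 2;
     -3 * X 0, -X 1, 0, 0;
     0, -2 * X 0, -2 * X 1, 0;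
     0, 0, -X 0, -3 * X 1;
     1, 0, 0, 0;
     0, 1, 0, 0;
     0, 0, 1, 0;
     0, 0, 0, 1]

noncomputable def Kmat (a b : ℝ) : Matrix (Fin 9) (Fin 4) ℝ := Kpoly.map (eval ![a, b])

lemma Lmat_mulVec (a b : ℝ) (x : Fin 9 → ℝ) :
    Lmat a b *ᵥ x = ![x 0 - 3 * a ^ 2 * x 5 - 2 * a * b * x 6 - b ^ 2 * x 7,
      x 1 - a ^ 2 * x 6 - 2 * a * b * x 7 - 3 * b ^ 2 * x 8,
      x 2 + 3 * a * x 5 + b * x 6,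
      x 3 + 2 * a * x 6 + 2 * b * x 7,
      x 4 + a * x 7 + 3 * b * x 8] := by
  ext i
  fin_cases i <;> simp [Lmat, mulVec, dotProduct, Fin.sum_univ_succ] <;> ring

lemma Kmat_mulVec (a b : ℝ) (y : Fin 4 → ℝ) :
    Kmat a b *ᵥ y = ![3 * a ^ 2 * y 0 + 2 * a * b * y 1 + b ^ 2 * y 2,
      a ^ 2 * y 1 + 2 * a * b * y 2 + 3 * b ^ 2 * y 3,
      -3 * a * y 0 - b * y 1,
      -2 * a * y 1 - 2 * b * y 2,
      -a * y 2 - 3 * b * y 3,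
      y 0, y 1, y 2, y 3] := by
  ext i
  fin_cases i <;> simp [Kmat, Kpoly, mulVec, dotProduct, Fin.sum_univ_succ] <;> ring

lemma Kmat_mulVec_injective (a b : ℝ) : Function.Injective (Kmat a b).mulVec := by
  intro y z h
  simp only [Kmat_mulVec] at h
  ext k
  fin_cases k
  exacts [congrFun h 5, congrFun h 6, congrFun h 7, congrFun h 8]

lemma ker_Lmap (a b : ℝ) : LinearMap.ker (Lmap a b) = LinearMap.range (Kmat a b).mulVecLin := by
  apply le_antisymm
  · intro x hx
    have h : Lmat a b *ᵥ x = 0 := hx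
    simp only [Lmat_mulVec, cons_eq_zero_iff, zero_empty, and_true] at h
    obtain ⟨h0, h1, h2, h3, h4⟩ := h
    refine ⟨![x 5, x 6, x 7, x 8], ?_⟩
    ext i
    fin_cases i <;> simp [Kmat_mulVec] <;> linarith
  · rintro _ ⟨y, rfl⟩
    ext i
    fin_cases i <;> simp [Lmap, Lmat_mulVec, Kmat_mulVec] <;> ring

lemma vecMul_Kmat (u : Fin 9 → ℝ) (a b : ℝ) :
    u ᵥ* Kmat a b = ![3 * a ^ 2 * u 0 - 3 * a * u 2 + u 5,
      2 * a * b * u 0 + a ^ 2 * u 1 - b * u 2 - 2 * a * u 3 + u 6,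
      b ^ 2 * u 0 + 2 * a * b * u 1 - 2 * b * u 3 - a * u 4 + u 7,
      3 * b ^ 2 * u 1 - 3 * b * u 4 + u 8] := by
  ext k
  fin_cases k <;> simp [Kmat, Kpoly, vecMul, dotProduct, Fin.sum_univ_succ] <;> ring

/- The ascription on `C` makes `*` the product of `Matrix`, not of `CStarMatrix`. -/
noncomputable def minorPoly {m : Type*} (W : Matrix m (Fin 9) ℝ) (r : Fin 2 → m)
    (c : Fin 2 → Fin 4) : MvPolynomial (Fin 2) ℝ :=
  ((W.map (C : ℝ →+* MvPolynomial (Fin 2) ℝ) * Kpoly).submatrix r c).det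

lemma eval_minorPoly {m : Type*} (W : Matrix m (Fin 9) ℝ) (r : Fin 2 → m) (c : Fin 2 → Fin 4)
    (a b : ℝ) : eval ![a, b] (minorPoly W r c) = ((W * Kmat a b).submatrix r c).det := by
  rw [minorPoly, RingHom.map_det, RingHom.mapMatrix_apply, ← submatrix_map, Matrix.map_mul, map_map]
  simp [Kmat, Function.comp_def]

set_option maxHeartbeats 2000000 in
theorem mul_eq_mul_of_vecMul_Kmat_mul_eq_mul (u v : Fin 9 → ℝ)
    (h : ∀ a b : ℝ, ∀ k l, (u ᵥ* Kmat a b) k * (v ᵥ* Kmat a b) l =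
      (u ᵥ* Kmat a b) l * (v ᵥ* Kmat a b) k) (m n : Fin 9) :
    u m * v n = u n * v m := by
  simp only [vecMul_Kmat] at h
  have h01 := fun a b => h a b 0 1
  have h02 := fun a b => h a b 0 2
  have h03 := fun a b => h a b 0 3
  have h12 := fun a b => h a b 1 2
  have h13 := fun a b => h a b 1 3
  have h23 := fun a b => h a b 2 3
  simp only [cons_val] at h01 h02 h03 h12 h13 h23
  /- On each coordinate axis the minors are polynomials of degree at most 4 in one variable, so
  their values at `-2, …, 2` determine their coefficients. These coefficients, together with the
  `ab`-coefficient of the minor of columns `0, 3`, form a linear system in the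
  `u m * v n - u n * v m` whose only solution is zero. -/
  have key : ∀ m n : Fin 9, m < n → u m * v n = u n * v m := by
    intro m n hmn
    fin_cases m <;> fin_cases n <;> (try simp at hmn) <;>
    simp only [Fin.zero_eta, Fin.mk_one, Fin.reduceFinMk] <;>
    linarith [h01 (-2) 0, h01 (-1) 0, h01 0 0, h01 1 0, h01 2 0,
      h01 0 (-2), h01 0 (-1), h01 0 1, h01 0 2,
      h02 (-2) 0, h02 (-1) 0, h02 0 0, h02 1 0, h02 2 0,
      h02 0 (-2), h02 0 (-1), h02 0 1, h02 0 2,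
      h03 (-2) 0, h03 (-1) 0, h03 0 0, h03 1 0, h03 2 0,
      h03 0 (-2), h03 0 (-1), h03 0 1, h03 0 2,
      h12 (-2) 0, h12 (-1) 0, h12 0 0, h12 1 0, h12 2 0,
      h12 0 (-2), h12 0 (-1), h12 0 1, h12 0 2,
      h13 (-2) 0, h13 (-1) 0, h13 0 0, h13 1 0, h13 2 0,
      h13 0 (-2), h13 0 (-1), h13 0 1, h13 0 2,
      h23 (-2) 0, h23 (-1) 0, h23 0 0, h23 1 0, h23 2 0,
      h23 0 (-2), h23 0 (-1), h23 0 1, h23 0 2,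
      h03 1 1, h03 1 (-1), h03 (-1) 1, h03 (-1) (-1)]
  rcases lt_trichotomy m n with hlt | rfl | hgt
  · exact key m n hlt
  · rfl
  · exact (key n m hgt).symm

theorem stmt5 (V : Submodule ℝ (Fin 9 → ℝ)) (hV : Module.finrank ℝ V = 6) :
    ∃ P : MvPolynomial (Fin 2) ℝ, P ≠ 0 ∧ ∀ a b : ℝ,
      MvPolynomial.eval ![a, b] P ≠ 0 →
      4 ≤ Module.finrank ℝ (Submodule.map (Lmap a b) V) := by
  obtain ⟨W, hWrows, rfl⟩ := exists_linearIndependent_rows_ker_eq V (c := 3) (by rw [hV])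
  obtain ⟨k, l, hkl⟩ : ∃ k l, minorPoly W ![0, 1] ![k, l] ≠ 0 := by
    by_contra! h
    obtain ⟨m, n, hmn⟩ := hWrows.exists_mul_ne_mul (i := 0) (j := 1) (by decide)
    refine hmn (mul_eq_mul_of_vecMul_Kmat_mul_eq_mul _ _ (fun a b k l => ?_) m n)
    have := congrArg (eval ![a, b]) (h k l)
    rw [eval_minorPoly, map_zero, det_fin_two] at this
    exact sub_eq_zero.mp this
  refine ⟨_, hkl, fun a b hab => ?_⟩
  rw [eval_minorPoly] at hab
  have hrank := (W * Kmat a b).card_le_rank_of_det_submatrix_ne_zero _ _ hab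
  have hsum := Submodule.finrank_map_add_finrank_comap_of_range_eq_ker
    (Kmat_mulVec_injective a b) (ker_Lmap a b).symm (LinearMap.ker W.mulVecLin)
  have hnull := LinearMap.finrank_range_add_finrank_ker (W * Kmat a b).mulVecLin
  rw [← LinearMap.ker_comp, ← mulVecLin_mul] at hsum
  rw [finrank_fin_fun] at hnull
  simp only [Fintype.card_fin, rank] at hrank
  omega
end

section
/- Let $V$ be a linear subspace of $S=S_1\oplus S_2\oplus S_3$ with $\dim V=2$. Then for almost every $\xi\in\mathbb{R}^2$, $\dim(\pi_{1,2}P_\xi(V))\ge 2$. -/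
open Matrix

section
variable {X : Type*}
lemma vec9_5 (x0 x1 x2 x3 x4 x5 x6 x7 x8 : X) : (![x0,x1,x2,x3,x4,x5,x6,x7,x8]) 5 = x5 := rfl
lemma vec9_6 (x0 x1 x2 x3 x4 x5 x6 x7 x8 : X) : (![x0,x1,x2,x3,x4,x5,x6,x7,x8]) 6 = x6 := rfl
lemma vec9_7 (x0 x1 x2 x3 x4 x5 x6 x7 x8 : X) : (![x0,x1,x2,x3,x4,x5,x6,x7,x8]) 7 = x7 := rfl
lemma vec9_8 (x0 x1 x2 x3 x4 x5 x6 x7 x8 : X) : (![x0,x1,x2,x3,x4,x5,x6,x7,x8]) 8 = x8 := rfl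
end

lemma sum_univ_nine {Y : Type*} [AddCommMonoid Y] (f : Fin 9 → Y) :
    ∑ i, f i = f 0 + f 1 + f 2 + f 3 + f 4 + f 5 + f 6 + f 7 + f 8 := by
  rw [Fin.sum_univ_castSucc, Fin.sum_univ_eight]; rfl

lemma ten_squares {x0 x1 x2 x3 x4 x5 x6 x7 x8 x9 : ℝ}
    (h : x0^2 + x1^2 + x2^2 + x3^2 + x4^2 + x5^2 + x6^2 + x7^2 + x8^2 + x9^2 = 0) :
    x0 = 0 ∧ x1 = 0 ∧ x2 = 0 ∧ x3 = 0 ∧ x4 = 0 ∧ x5 = 0 ∧ x6 = 0 ∧ x7 = 0 ∧ x8 = 0 ∧ x9 = 0 := by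
  have n0 := sq_nonneg x0; have n1 := sq_nonneg x1; have n2 := sq_nonneg x2
  have n3 := sq_nonneg x3; have n4 := sq_nonneg x4; have n5 := sq_nonneg x5
  have n6 := sq_nonneg x6; have n7 := sq_nonneg x7; have n8 := sq_nonneg x8
  have n9 := sq_nonneg x9
  refine ⟨?_, ?_, ?_, ?_, ?_, ?_, ?_, ?_, ?_, ?_⟩ <;>
    exact sq_eq_zero_iff.mp (by linarith)

open MvPolynomial in
noncomputable def prow (u : Fin 9 → ℝ) : Fin 5 → MvPolynomial (Fin 2) ℝ :=
  ![C (u 0) - 3*(X 0)^2*C (u 5) - 2*(X 0)*(X 1)*C (u 6) - (X 1)^2*C (u 7),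
    C (u 1) - (X 0)^2*C (u 6) - 2*(X 0)*(X 1)*C (u 7) - 3*(X 1)^2*C (u 8),
    C (u 2) + 3*(X 0)*C (u 5) + (X 1)*C (u 6),
    C (u 3) + 2*(X 0)*C (u 6) + 2*(X 1)*C (u 7),
    C (u 4) + (X 0)*C (u 7) + 3*(X 1)*C (u 8)]

noncomputable def pminor (v w : Fin 9 → ℝ) (r s : Fin 5) : MvPolynomial (Fin 2) ℝ :=
  prow v r * prow w s - prow v s * prow w r

noncomputable def Pbig (v w : Fin 9 → ℝ) : MvPolynomial (Fin 2) ℝ :=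
  (pminor v w 0 1)^2 + (pminor v w 0 2)^2 + (pminor v w 0 3)^2 + (pminor v w 0 4)^2 + (pminor v w 1 2)^2 + (pminor v w 1 3)^2 + (pminor v w 1 4)^2 + (pminor v w 2 3)^2 + (pminor v w 2 4)^2 + (pminor v w 3 4)^2

lemma Lmap_explicit (a b : ℝ) (u : Fin 9 → ℝ) :
    Lmap a b u = ![u 0 - 3*a^2*u 5 - 2*a*b*u 6 - b^2*u 7,
      u 1 - a^2*u 6 - 2*a*b*u 7 - 3*b^2*u 8,
      u 2 + 3*a*u 5 + b*u 6,
      u 3 + 2*a*u 6 + 2*b*u 7,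
      u 4 + a*u 7 + 3*b*u 8] := by
  funext r
  fin_cases r <;>
    simp [Lmap, Lmat, Matrix.mulVecLin_apply, Matrix.mulVec, dotProduct,
      sum_univ_nine, vec9_5, vec9_6, vec9_7, vec9_8] <;> ring

lemma evalPbig (v w : Fin 9 → ℝ) (a b : ℝ) :
    MvPolynomial.eval ![a, b] (Pbig v w) =
      ((v 0 - 3*a^2*v 5 - 2*a*b*v 6 - b^2*v 7) * (w 1 - a^2*w 6 - 2*a*b*w 7 - 3*b^2*w 8) - (v 1 - a^2*v 6 - 2*a*b*v 7 - 3*b^2*v 8) * (w 0 - 3*a^2*w 5 - 2*a*b*w 6 - b^2*w 7))^2 +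
      ((v 0 - 3*a^2*v 5 - 2*a*b*v 6 - b^2*v 7) * (w 2 + 3*a*w 5 + b*w 6) - (v 2 + 3*a*v 5 + b*v 6) * (w 0 - 3*a^2*w 5 - 2*a*b*w 6 - b^2*w 7))^2 +
      ((v 0 - 3*a^2*v 5 - 2*a*b*v 6 - b^2*v 7) * (w 3 + 2*a*w 6 + 2*b*w 7) - (v 3 + 2*a*v 6 + 2*b*v 7) * (w 0 - 3*a^2*w 5 - 2*a*b*w 6 - b^2*w 7))^2 +
      ((v 0 - 3*a^2*v 5 - 2*a*b*v 6 - b^2*v 7) * (w 4 + a*w 7 + 3*b*w 8) - (v 4 + a*v 7 + 3*b*v 8) * (w 0 - 3*a^2*w 5 - 2*a*b*w 6 - b^2*w 7))^2 +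
      ((v 1 - a^2*v 6 - 2*a*b*v 7 - 3*b^2*v 8) * (w 2 + 3*a*w 5 + b*w 6) - (v 2 + 3*a*v 5 + b*v 6) * (w 1 - a^2*w 6 - 2*a*b*w 7 - 3*b^2*w 8))^2 +
      ((v 1 - a^2*v 6 - 2*a*b*v 7 - 3*b^2*v 8) * (w 3 + 2*a*w 6 + 2*b*w 7) - (v 3 + 2*a*v 6 + 2*b*v 7) * (w 1 - a^2*w 6 - 2*a*b*w 7 - 3*b^2*w 8))^2 +
      ((v 1 - a^2*v 6 - 2*a*b*v 7 - 3*b^2*v 8) * (w 4 + a*w 7 + 3*b*w 8) - (v 4 + a*v 7 + 3*b*v 8) * (w 1 - a^2*w 6 - 2*a*b*w 7 - 3*b^2*w 8))^2 +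
      ((v 2 + 3*a*v 5 + b*v 6) * (w 3 + 2*a*w 6 + 2*b*w 7) - (v 3 + 2*a*v 6 + 2*b*v 7) * (w 2 + 3*a*w 5 + b*w 6))^2 +
      ((v 2 + 3*a*v 5 + b*v 6) * (w 4 + a*w 7 + 3*b*w 8) - (v 4 + a*v 7 + 3*b*v 8) * (w 2 + 3*a*w 5 + b*w 6))^2 +
      ((v 3 + 2*a*v 6 + 2*b*v 7) * (w 4 + a*w 7 + 3*b*w 8) - (v 4 + a*v 7 + 3*b*v 8) * (w 3 + 2*a*w 6 + 2*b*w 7))^2 := by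
  simp [Pbig, pminor, prow]

lemma indep_of_minor {x y : Fin 5 → ℝ} {r s : Fin 5}
    (h : x r * y s - x s * y r ≠ 0) : LinearIndependent ℝ ![x, y] := by
  rw [LinearIndependent.pair_iff]
  intro c d hcd
  have h1 : c * x r + d * y r = 0 := congrFun hcd r
  have h2 : c * x s + d * y s = 0 := congrFun hcd s
  constructor
  · have hc : c * (x r * y s - x s * y r) = 0 := by linear_combination y s * h1 - y r * h2
    exact (mul_eq_zero.mp hc).resolve_right h
  · have hd : d * (x r * y s - x s * y r) = 0 := by linear_combination x r * h2 - x s * h1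
    exact (mul_eq_zero.mp hd).resolve_right h

lemma exists_pair (V : Submodule ℝ (Fin 9 → ℝ)) (hV : Module.finrank ℝ V = 2) :
    ∃ v w : Fin 9 → ℝ, v ∈ V ∧ w ∈ V ∧ LinearIndependent ℝ ![v, w] := by
  let bV := Module.finBasisOfFinrankEq ℝ V hV
  refine ⟨bV 0, bV 1, (bV 0).2, (bV 1).2, ?_⟩
  have h1 := bV.linearIndependent.map' V.subtype V.ker_subtype
  have e : ![((bV 0 : V) : Fin 9 → ℝ), ((bV 1 : V) : Fin 9 → ℝ)] = V.subtype ∘ bV := by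
    funext i; fin_cases i <;> rfl
  rw [e]; exact h1

set_option maxHeartbeats 8000000 in
theorem stmt7 (V : Submodule ℝ (Fin 9 → ℝ)) (hV : Module.finrank ℝ V = 2) :
    ∃ P : MvPolynomial (Fin 2) ℝ, P ≠ 0 ∧ ∀ a b : ℝ,
      MvPolynomial.eval ![a, b] P ≠ 0 →
      2 ≤ Module.finrank ℝ (Submodule.map (Lmap a b) V) := by
  obtain ⟨v, w, hvV, hwV, hli⟩ := exists_pair V hV
  refine ⟨Pbig v w, ?_, ?_⟩
  · -- Pbig v w ≠ 0
    intro hP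
    have hz : ∀ a b : ℝ,
        ((v 0 - 3*a^2*v 5 - 2*a*b*v 6 - b^2*v 7) * (w 1 - a^2*w 6 - 2*a*b*w 7 - 3*b^2*w 8) - (v 1 - a^2*v 6 - 2*a*b*v 7 - 3*b^2*v 8) * (w 0 - 3*a^2*w 5 - 2*a*b*w 6 - b^2*w 7)) = 0 ∧
        ((v 0 - 3*a^2*v 5 - 2*a*b*v 6 - b^2*v 7) * (w 2 + 3*a*w 5 + b*w 6) - (v 2 + 3*a*v 5 + b*v 6) * (w 0 - 3*a^2*w 5 - 2*a*b*w 6 - b^2*w 7)) = 0 ∧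
        ((v 0 - 3*a^2*v 5 - 2*a*b*v 6 - b^2*v 7) * (w 3 + 2*a*w 6 + 2*b*w 7) - (v 3 + 2*a*v 6 + 2*b*v 7) * (w 0 - 3*a^2*w 5 - 2*a*b*w 6 - b^2*w 7)) = 0 ∧
        ((v 0 - 3*a^2*v 5 - 2*a*b*v 6 - b^2*v 7) * (w 4 + a*w 7 + 3*b*w 8) - (v 4 + a*v 7 + 3*b*v 8) * (w 0 - 3*a^2*w 5 - 2*a*b*w 6 - b^2*w 7)) = 0 ∧
        ((v 1 - a^2*v 6 - 2*a*b*v 7 - 3*b^2*v 8) * (w 2 + 3*a*w 5 + b*w 6) - (v 2 + 3*a*v 5 + b*v 6) * (w 1 - a^2*w 6 - 2*a*b*w 7 - 3*b^2*w 8)) = 0 ∧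
        ((v 1 - a^2*v 6 - 2*a*b*v 7 - 3*b^2*v 8) * (w 3 + 2*a*w 6 + 2*b*w 7) - (v 3 + 2*a*v 6 + 2*b*v 7) * (w 1 - a^2*w 6 - 2*a*b*w 7 - 3*b^2*w 8)) = 0 ∧
        ((v 1 - a^2*v 6 - 2*a*b*v 7 - 3*b^2*v 8) * (w 4 + a*w 7 + 3*b*w 8) - (v 4 + a*v 7 + 3*b*v 8) * (w 1 - a^2*w 6 - 2*a*b*w 7 - 3*b^2*w 8)) = 0 ∧
        ((v 2 + 3*a*v 5 + b*v 6) * (w 3 + 2*a*w 6 + 2*b*w 7) - (v 3 + 2*a*v 6 + 2*b*v 7) * (w 2 + 3*a*w 5 + b*w 6)) = 0 ∧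
        ((v 2 + 3*a*v 5 + b*v 6) * (w 4 + a*w 7 + 3*b*w 8) - (v 4 + a*v 7 + 3*b*v 8) * (w 2 + 3*a*w 5 + b*w 6)) = 0 ∧
        ((v 3 + 2*a*v 6 + 2*b*v 7) * (w 4 + a*w 7 + 3*b*w 8) - (v 4 + a*v 7 + 3*b*v 8) * (w 3 + 2*a*w 6 + 2*b*w 7)) = 0 := by
      intro a b
      have h := evalPbig v w a b
      rw [hP, map_zero] at h
      exact ten_squares h.symm
    obtain ⟨h0_0, h0_1, h0_2, h0_3, h0_4, h0_5, h0_6, h0_7, h0_8, h0_9⟩ := hz (0 : ℝ) (0 : ℝ)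
    obtain ⟨h1_0, h1_1, h1_2, h1_3, h1_4, h1_5, h1_6, h1_7, h1_8, h1_9⟩ := hz (1 : ℝ) (0 : ℝ)
    obtain ⟨h2_0, h2_1, h2_2, h2_3, h2_4, h2_5, h2_6, h2_7, h2_8, h2_9⟩ := hz (0 : ℝ) (1 : ℝ)
    obtain ⟨h3_0, h3_1, h3_2, h3_3, h3_4, h3_5, h3_6, h3_7, h3_8, h3_9⟩ := hz ((-1) : ℝ) (0 : ℝ)
    obtain ⟨h4_0, h4_1, h4_2, h4_3, h4_4, h4_5, h4_6, h4_7, h4_8, h4_9⟩ := hz (0 : ℝ) ((-1) : ℝ)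
    obtain ⟨h5_0, h5_1, h5_2, h5_3, h5_4, h5_5, h5_6, h5_7, h5_8, h5_9⟩ := hz (1 : ℝ) (1 : ℝ)
    have t0_1 : w 0 * v 1 - v 0 * w 1 = 0 := by
      linear_combination (-1) * h0_0
    have t0_2 : w 0 * v 2 - v 0 * w 2 = 0 := by
      linear_combination (-1) * h0_1
    have t0_3 : w 0 * v 3 - v 0 * w 3 = 0 := by
      linear_combination (-1) * h0_2
    have t0_4 : w 0 * v 4 - v 0 * w 4 = 0 := by
      linear_combination (-1) * h0_3
    have t1_2 : w 1 * v 2 - v 1 * w 2 = 0 := by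
      linear_combination (-1) * h0_4
    have t1_3 : w 1 * v 3 - v 1 * w 3 = 0 := by
      linear_combination (-1) * h0_5
    have t1_4 : w 1 * v 4 - v 1 * w 4 = 0 := by
      linear_combination (-1) * h0_6
    have t2_3 : w 2 * v 3 - v 2 * w 3 = 0 := by
      linear_combination (-1) * h0_7
    have t2_4 : w 2 * v 4 - v 2 * w 4 = 0 := by
      linear_combination (-1) * h0_8
    have t3_4 : w 3 * v 4 - v 3 * w 4 = 0 := by
      linear_combination (-1) * h0_9
    have t0_5 : w 0 * v 5 - v 0 * w 5 = 0 := by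
      linear_combination ((-1)/(6)) * h1_1 + ((1)/(6)) * h3_1
    have t0_6 : w 0 * v 6 - v 0 * w 6 = 0 := by
      linear_combination (-1) * h0_0 + (1) * h1_0 + ((-1)/(2)) * h1_4 + ((1)/(2)) * h3_4
    have t0_7 : w 0 * v 7 - v 0 * w 7 = 0 := by
      linear_combination (1) * h0_8 + ((-1)/(2)) * h1_3 + ((-1)/(2)) * h1_8 + ((1)/(2)) * h3_3 + ((-1)/(2)) * h3_8
    have t1_5 : w 1 * v 5 - v 1 * w 5 = 0 := by
      linear_combination ((1)/(3)) * h0_0 + ((-1)/(3)) * h1_0 + ((-1)/(12)) * h1_2 + ((1)/(12)) * h3_2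
    have t1_6 : w 1 * v 6 - v 1 * w 6 = 0 := by
      linear_combination (-1) * h0_0 + (-1) * h0_1 + ((1)/(2)) * h0_5 + ((1)/(2)) * h0_7 + (1) * h1_0 + ((-1)/(2)) * h1_4 + ((-1)/(2)) * h1_5 + (1) * h2_1 + ((-1)/(2)) * h2_7 + ((1)/(2)) * h3_4
    have t1_7 : w 1 * v 7 - v 1 * w 7 = 0 := by
      linear_combination ((-1)/(2)) * h0_2 + (1) * h0_6 + (1) * h0_8 + ((1)/(2)) * h0_9 + ((-1)/(2)) * h1_3 + (-1) * h1_6 + ((-1)/(2)) * h1_8 + ((-1)/(2)) * h1_9 + ((1)/(2)) * h2_2 + ((1)/(2)) * h3_3 + ((-1)/(2)) * h3_8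
    have t2_5 : w 2 * v 5 - v 2 * w 5 = 0 := by
      linear_combination ((1)/(3)) * h0_1 + ((-1)/(6)) * h1_1 + ((-1)/(6)) * h3_1
    have t2_6 : w 2 * v 6 - v 2 * w 6 = 0 := by
      linear_combination (1) * h0_4 + ((-1)/(2)) * h1_4 + ((-1)/(2)) * h3_4
    have t2_7 : w 2 * v 7 - v 2 * w 7 = 0 := by
      linear_combination (1) * h0_3 + ((-1)/(2)) * h1_3 + ((-1)/(2)) * h1_8 + ((-1)/(2)) * h3_3 + ((1)/(2)) * h3_8
    have t3_5 : w 3 * v 5 - v 3 * w 5 = 0 := by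
      linear_combination ((1)/(3)) * h0_2 + ((-1)/(6)) * h1_2 + ((-1)/(6)) * h3_2
    have t3_6 : w 3 * v 6 - v 3 * w 6 = 0 := by
      linear_combination (2) * h0_0 + (2) * h0_1 + (-1) * h0_7 + (-2) * h1_0 + (1) * h1_4 + (-2) * h2_1 + (1) * h2_7 + (-1) * h3_4
    have t3_7 : w 3 * v 7 - v 3 * w 7 = 0 := by
      linear_combination (1) * h0_2 + (-2) * h0_8 + (1) * h1_3 + (1) * h1_8 + (-1) * h2_2 + (-1) * h3_3 + (1) * h3_8
    have t4_5 : w 4 * v 5 - v 4 * w 5 = 0 := by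
      linear_combination ((1)/(3)) * h0_3 + ((-1)/(6)) * h1_3 + ((-1)/(6)) * h3_3
    have t4_6 : w 4 * v 6 - v 4 * w 6 = 0 := by
      linear_combination (1) * h0_0 + (1) * h0_1 + ((1)/(2)) * h0_2 + (-1) * h0_3 + (-1) * h0_8 + ((-1)/(2)) * h0_9 + (-1) * h1_0 + (1) * h1_3 + ((1)/(2)) * h1_4 + (1) * h1_8 + ((1)/(2)) * h1_9 + (-1) * h2_1 + ((-1)/(2)) * h2_2 + ((-1)/(2)) * h3_4
    have t4_7 : w 4 * v 7 - v 4 * w 7 = 0 := by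
      linear_combination (1) * h0_0 + ((1)/(2)) * h0_2 + (1) * h0_3 + (-1) * h0_6 + (-1) * h0_8 + ((-1)/(2)) * h0_9 + ((1)/(2)) * h1_3 + (1) * h1_6 + ((1)/(2)) * h1_8 + ((1)/(2)) * h1_9 + (-1) * h2_0 + ((-1)/(2)) * h2_2 + (-1) * h2_3 + ((-1)/(2)) * h3_3 + ((1)/(2)) * h3_8
    have t5_6 : w 5 * v 6 - v 5 * w 6 = 0 := by
      linear_combination ((-1)/(3)) * h0_0 + ((1)/(3)) * h1_0 + ((1)/(12)) * h1_2 + ((-1)/(6)) * h1_4 + ((-1)/(12)) * h3_2 + ((1)/(6)) * h3_4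
    have t5_7 : w 5 * v 7 - v 5 * w 7 = 0 := by
      linear_combination ((1)/(3)) * h0_8 + ((-1)/(6)) * h1_8 + ((-1)/(6)) * h3_8
    have t6_7 : w 6 * v 7 - v 6 * w 7 = 0 := by
      linear_combination (1) * h0_0 + (1) * h0_1 + (-1) * h0_3 + (-1) * h1_0 + ((1)/(2)) * h1_3 + ((1)/(2)) * h1_4 + ((1)/(2)) * h1_8 + (-1) * h2_1 + ((1)/(2)) * h3_3 + ((-1)/(2)) * h3_4 + ((-1)/(2)) * h3_8
    have t0_8 : w 0 * v 8 - v 0 * w 8 = 0 := by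
      linear_combination ((-1)/(3)) * h0_0 + ((1)/(3)) * h2_0 + ((-1)/(12)) * h2_5 + ((1)/(12)) * h4_5
    have t1_8 : w 1 * v 8 - v 1 * w 8 = 0 := by
      linear_combination ((-1)/(6)) * h2_6 + ((1)/(6)) * h4_6
    have t2_8 : w 2 * v 8 - v 2 * w 8 = 0 := by
      linear_combination ((1)/(3)) * h0_4 + ((-1)/(6)) * h2_4 + ((-1)/(6)) * h4_4
    have t3_8 : w 3 * v 8 - v 3 * w 8 = 0 := by
      linear_combination ((1)/(3)) * h0_5 + ((-1)/(6)) * h2_5 + ((-1)/(6)) * h4_5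
    have t4_8 : w 4 * v 8 - v 4 * w 8 = 0 := by
      linear_combination ((1)/(3)) * h0_6 + ((-1)/(6)) * h2_6 + ((-1)/(6)) * h4_6
    have t6_8 : w 6 * v 8 - v 6 * w 8 = 0 := by
      linear_combination ((1)/(3)) * h0_0 + ((1)/(3)) * h0_1 + ((-1)/(6)) * h0_5 + ((-1)/(6)) * h0_7 + ((-1)/(3)) * h1_0 + ((1)/(6)) * h1_4 + ((1)/(6)) * h1_5 + ((-1)/(3)) * h2_1 + ((-1)/(6)) * h2_4 + ((1)/(6)) * h2_7 + ((-1)/(6)) * h3_4 + ((1)/(6)) * h4_4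
    have t7_8 : w 7 * v 8 - v 7 * w 8 = 0 := by
      linear_combination ((1)/(6)) * h0_2 + ((-1)/(3)) * h0_6 + ((-1)/(3)) * h0_8 + ((-1)/(6)) * h0_9 + ((1)/(6)) * h1_3 + ((1)/(3)) * h1_6 + ((1)/(6)) * h1_8 + ((1)/(6)) * h1_9 + ((-1)/(6)) * h2_2 + ((-1)/(12)) * h2_5 + ((-1)/(6)) * h3_3 + ((1)/(6)) * h3_8 + ((1)/(12)) * h4_5
    have t5_8 : w 5 * v 8 - v 5 * w 8 = 0 := by
      linear_combination ((-4)/(9)) * h0_0 + ((-1)/(3)) * h0_1 + ((1)/(3)) * h0_3 + ((4)/(9)) * h1_0 + ((-5)/(18)) * h1_3 + ((-1)/(6)) * h1_4 + ((-1)/(6)) * h1_8 + ((1)/(9)) * h2_0 + ((1)/(3)) * h2_1 + ((1)/(9)) * h2_4 + ((-1)/(18)) * h3_3 + ((1)/(6)) * h3_4 + ((1)/(6)) * h3_8 + ((-1)/(9)) * h4_4 + ((-1)/(9)) * h5_0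
    have t1_0 : w 1 * v 0 - v 1 * w 0 = 0 := by linear_combination (-1) * t0_1
    have t2_0 : w 2 * v 0 - v 2 * w 0 = 0 := by linear_combination (-1) * t0_2
    have t3_0 : w 3 * v 0 - v 3 * w 0 = 0 := by linear_combination (-1) * t0_3
    have t4_0 : w 4 * v 0 - v 4 * w 0 = 0 := by linear_combination (-1) * t0_4
    have t2_1 : w 2 * v 1 - v 2 * w 1 = 0 := by linear_combination (-1) * t1_2
    have t3_1 : w 3 * v 1 - v 3 * w 1 = 0 := by linear_combination (-1) * t1_3
    have t4_1 : w 4 * v 1 - v 4 * w 1 = 0 := by linear_combination (-1) * t1_4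
    have t3_2 : w 3 * v 2 - v 3 * w 2 = 0 := by linear_combination (-1) * t2_3
    have t4_2 : w 4 * v 2 - v 4 * w 2 = 0 := by linear_combination (-1) * t2_4
    have t4_3 : w 4 * v 3 - v 4 * w 3 = 0 := by linear_combination (-1) * t3_4
    have t5_0 : w 5 * v 0 - v 5 * w 0 = 0 := by linear_combination (-1) * t0_5
    have t6_0 : w 6 * v 0 - v 6 * w 0 = 0 := by linear_combination (-1) * t0_6
    have t7_0 : w 7 * v 0 - v 7 * w 0 = 0 := by linear_combination (-1) * t0_7
    have t5_1 : w 5 * v 1 - v 5 * w 1 = 0 := by linear_combination (-1) * t1_5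
    have t6_1 : w 6 * v 1 - v 6 * w 1 = 0 := by linear_combination (-1) * t1_6
    have t7_1 : w 7 * v 1 - v 7 * w 1 = 0 := by linear_combination (-1) * t1_7
    have t5_2 : w 5 * v 2 - v 5 * w 2 = 0 := by linear_combination (-1) * t2_5
    have t6_2 : w 6 * v 2 - v 6 * w 2 = 0 := by linear_combination (-1) * t2_6
    have t7_2 : w 7 * v 2 - v 7 * w 2 = 0 := by linear_combination (-1) * t2_7
    have t5_3 : w 5 * v 3 - v 5 * w 3 = 0 := by linear_combination (-1) * t3_5
    have t6_3 : w 6 * v 3 - v 6 * w 3 = 0 := by linear_combination (-1) * t3_6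
    have t7_3 : w 7 * v 3 - v 7 * w 3 = 0 := by linear_combination (-1) * t3_7
    have t5_4 : w 5 * v 4 - v 5 * w 4 = 0 := by linear_combination (-1) * t4_5
    have t6_4 : w 6 * v 4 - v 6 * w 4 = 0 := by linear_combination (-1) * t4_6
    have t7_4 : w 7 * v 4 - v 7 * w 4 = 0 := by linear_combination (-1) * t4_7
    have t6_5 : w 6 * v 5 - v 6 * w 5 = 0 := by linear_combination (-1) * t5_6
    have t7_5 : w 7 * v 5 - v 7 * w 5 = 0 := by linear_combination (-1) * t5_7
    have t7_6 : w 7 * v 6 - v 7 * w 6 = 0 := by linear_combination (-1) * t6_7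
    have t8_0 : w 8 * v 0 - v 8 * w 0 = 0 := by linear_combination (-1) * t0_8
    have t8_1 : w 8 * v 1 - v 8 * w 1 = 0 := by linear_combination (-1) * t1_8
    have t8_2 : w 8 * v 2 - v 8 * w 2 = 0 := by linear_combination (-1) * t2_8
    have t8_3 : w 8 * v 3 - v 8 * w 3 = 0 := by linear_combination (-1) * t3_8
    have t8_4 : w 8 * v 4 - v 8 * w 4 = 0 := by linear_combination (-1) * t4_8
    have t8_6 : w 8 * v 6 - v 8 * w 6 = 0 := by linear_combination (-1) * t6_8
    have t8_7 : w 8 * v 7 - v 8 * w 7 = 0 := by linear_combination (-1) * t7_8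
    have t8_5 : w 8 * v 5 - v 8 * w 5 = 0 := by linear_combination (-1) * t5_8
    have t0_0 : w 0 * v 0 - v 0 * w 0 = 0 := by ring
    have t1_1 : w 1 * v 1 - v 1 * w 1 = 0 := by ring
    have t2_2 : w 2 * v 2 - v 2 * w 2 = 0 := by ring
    have t3_3 : w 3 * v 3 - v 3 * w 3 = 0 := by ring
    have t4_4 : w 4 * v 4 - v 4 * w 4 = 0 := by ring
    have t5_5 : w 5 * v 5 - v 5 * w 5 = 0 := by ring
    have t6_6 : w 6 * v 6 - v 6 * w 6 = 0 := by ring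
    have t7_7 : w 7 * v 7 - v 7 * w 7 = 0 := by ring
    have t8_8 : w 8 * v 8 - v 8 * w 8 = 0 := by ring
    have hvne : v ≠ 0 := by simpa using hli.ne_zero 0
    obtain ⟨k, hk⟩ := Function.ne_iff.mp hvne
    have hsum : w k • v - v k • w = 0 := by
      funext j
      show w k * v j - v k * w j = 0
      fin_cases k <;> fin_cases j
      exacts [t0_0, t0_1, t0_2, t0_3, t0_4, t0_5, t0_6, t0_7, t0_8, t1_0, t1_1, t1_2, t1_3, t1_4, t1_5, t1_6, t1_7, t1_8, t2_0, t2_1, t2_2, t2_3, t2_4, t2_5, t2_6, t2_7, t2_8, t3_0, t3_1, t3_2, t3_3, t3_4, t3_5, t3_6, t3_7, t3_8, t4_0, t4_1, t4_2, t4_3, t4_4, t4_5, t4_6, t4_7, t4_8, t5_0, t5_1, t5_2, t5_3, t5_4, t5_5, t5_6, t5_7, t5_8, t6_0, t6_1, t6_2, t6_3, t6_4, t6_5, t6_6, t6_7, t6_8, t7_0, t7_1, t7_2, t7_3, t7_4, t7_5, t7_6, t7_7, t7_8, t8_0, t8_1, t8_2, t8_3, t8_4, t8_5, t8_6, t8_7,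 t8_8]
    have hpair := (LinearIndependent.pair_iff.mp hli (w k) (-(v k))
      (by rw [neg_smul, ← sub_eq_add_neg]; exact hsum)).2
    exact hk (neg_eq_zero.mp hpair)
  · intro a b hne
    have m0 : Lmap a b v 0 * Lmap a b w 1 - Lmap a b v 1 * Lmap a b w 0 =
        ((v 0 - 3*a^2*v 5 - 2*a*b*v 6 - b^2*v 7) * (w 1 - a^2*w 6 - 2*a*b*w 7 - 3*b^2*w 8) - (v 1 - a^2*v 6 - 2*a*b*v 7 - 3*b^2*v 8) * (w 0 - 3*a^2*w 5 - 2*a*b*w 6 - b^2*w 7)) := by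
      rw [Lmap_explicit a b v, Lmap_explicit a b w]; simp
    have m1 : Lmap a b v 0 * Lmap a b w 2 - Lmap a b v 2 * Lmap a b w 0 =
        ((v 0 - 3*a^2*v 5 - 2*a*b*v 6 - b^2*v 7) * (w 2 + 3*a*w 5 + b*w 6) - (v 2 + 3*a*v 5 + b*v 6) * (w 0 - 3*a^2*w 5 - 2*a*b*w 6 - b^2*w 7)) := by
      rw [Lmap_explicit a b v, Lmap_explicit a b w]; simp
    have m2 : Lmap a b v 0 * Lmap a b w 3 - Lmap a b v 3 * Lmap a b w 0 =
        ((v 0 - 3*a^2*v 5 - 2*a*b*v 6 - b^2*v 7) * (w 3 + 2*a*w 6 + 2*b*w 7) - (v 3 + 2*a*v 6 + 2*b*v 7) * (w 0 - 3*a^2*w 5 - 2*a*b*w 6 - b^2*w 7)) := by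
      rw [Lmap_explicit a b v, Lmap_explicit a b w]; simp
    have m3 : Lmap a b v 0 * Lmap a b w 4 - Lmap a b v 4 * Lmap a b w 0 =
        ((v 0 - 3*a^2*v 5 - 2*a*b*v 6 - b^2*v 7) * (w 4 + a*w 7 + 3*b*w 8) - (v 4 + a*v 7 + 3*b*v 8) * (w 0 - 3*a^2*w 5 - 2*a*b*w 6 - b^2*w 7)) := by
      rw [Lmap_explicit a b v, Lmap_explicit a b w]; simp
    have m4 : Lmap a b v 1 * Lmap a b w 2 - Lmap a b v 2 * Lmap a b w 1 =
        ((v 1 - a^2*v 6 - 2*a*b*v 7 - 3*b^2*v 8) * (w 2 + 3*a*w 5 + b*w 6) - (v 2 + 3*a*v 5 + b*v 6) * (w 1 - a^2*w 6 - 2*a*b*w 7 - 3*b^2*w 8)) := by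
      rw [Lmap_explicit a b v, Lmap_explicit a b w]; simp
    have m5 : Lmap a b v 1 * Lmap a b w 3 - Lmap a b v 3 * Lmap a b w 1 =
        ((v 1 - a^2*v 6 - 2*a*b*v 7 - 3*b^2*v 8) * (w 3 + 2*a*w 6 + 2*b*w 7) - (v 3 + 2*a*v 6 + 2*b*v 7) * (w 1 - a^2*w 6 - 2*a*b*w 7 - 3*b^2*w 8)) := by
      rw [Lmap_explicit a b v, Lmap_explicit a b w]; simp
    have m6 : Lmap a b v 1 * Lmap a b w 4 - Lmap a b v 4 * Lmap a b w 1 =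
        ((v 1 - a^2*v 6 - 2*a*b*v 7 - 3*b^2*v 8) * (w 4 + a*w 7 + 3*b*w 8) - (v 4 + a*v 7 + 3*b*v 8) * (w 1 - a^2*w 6 - 2*a*b*w 7 - 3*b^2*w 8)) := by
      rw [Lmap_explicit a b v, Lmap_explicit a b w]; simp
    have m7 : Lmap a b v 2 * Lmap a b w 3 - Lmap a b v 3 * Lmap a b w 2 =
        ((v 2 + 3*a*v 5 + b*v 6) * (w 3 + 2*a*w 6 + 2*b*w 7) - (v 3 + 2*a*v 6 + 2*b*v 7) * (w 2 + 3*a*w 5 + b*w 6)) := by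
      rw [Lmap_explicit a b v, Lmap_explicit a b w]; simp
    have m8 : Lmap a b v 2 * Lmap a b w 4 - Lmap a b v 4 * Lmap a b w 2 =
        ((v 2 + 3*a*v 5 + b*v 6) * (w 4 + a*w 7 + 3*b*w 8) - (v 4 + a*v 7 + 3*b*v 8) * (w 2 + 3*a*w 5 + b*w 6)) := by
      rw [Lmap_explicit a b v, Lmap_explicit a b w]; simp
    have m9 : Lmap a b v 3 * Lmap a b w 4 - Lmap a b v 4 * Lmap a b w 3 =
        ((v 3 + 2*a*v 6 + 2*b*v 7) * (w 4 + a*w 7 + 3*b*w 8) - (v 4 + a*v 7 + 3*b*v 8) * (w 3 + 2*a*w 6 + 2*b*w 7)) := by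
      rw [Lmap_explicit a b v, Lmap_explicit a b w]; simp
    have hex : ∃ r s : Fin 5,
        Lmap a b v r * Lmap a b w s - Lmap a b v s * Lmap a b w r ≠ 0 := by
      by_contra hall
      push_neg at hall
      apply hne
      rw [evalPbig v w a b]
      rw [← m0, ← m1, ← m2, ← m3, ← m4, ← m5, ← m6, ← m7, ← m8, ← m9]
      simp [hall]
    obtain ⟨r, s, hrs⟩ := hex
    have hli2 : LinearIndependent ℝ ![Lmap a b v, Lmap a b w] := indep_of_minor hrs
    have hsub : Submodule.span ℝ (Set.range ![Lmap a b v, Lmap a b w]) ≤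
        Submodule.map (Lmap a b) V := by
      rw [Submodule.span_le]
      rintro z ⟨i, rfl⟩
      fin_cases i
      · exact ⟨v, hvV, rfl⟩
      · exact ⟨w, hwV, rfl⟩
    have hfr : Module.finrank ℝ
        (Submodule.span ℝ (Set.range ![Lmap a b v, Lmap a b w])) = 2 := by
      rw [finrank_span_eq_card hli2, Fintype.card_fin]
    exact hfr ▸ Submodule.finrank_mono hsub
end

section
/- For a nonzero vector $v\in\mathbb{R}^5$, the $4\times 5$ matrix with rows $(a,0,-1,0,0)$, $(0,b,0,0,-1)$, $(b,a,0,-2,0)$, $(v_1,v_2,v_3,v_4,v_5)$ has rank $4$ for all $(a,b)\in\mathbb{R}^2$ outside the zero set of some nonzero polynomial in $(a,b)$. Equivalently, the rank is $4$ unless both $v_1+v_3a+\tfrac12 v_4 b$ and $v_2+v_5b+\tfrac12 v_4 a$ vanish identically as polynomials in $(a,b)$, which is impossible for $v\neq 0$. -/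
/-!
Deleting column `0` or column `1` gives the maximal minors `-2 (v₁ + v₃ a/2 + v₄ b)` and
`-2 (v₀ + v₂ a + v₃ b/2)`, which cannot both vanish identically unless `v = 0`. So some maximal
minor of the matrix with entries in `ℝ[a, b]` is a nonzero polynomial, and wherever it does not
vanish the rank is 4.
-/

open MvPolynomial Matrix

theorem Matrix.rank_eq_card_height_of_det_submatrix_ne_zero {m n K : Type*} [Fintype m]
    [DecidableEq m] [Fintype n] [Field K] (A : Matrix m n K) (c : m → n)
    (h : (A.submatrix id c).det ≠ 0) : A.rank = Fintype.card m := by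
  refine A.rank_le_card_height.antisymm ?_
  rw [← rank_of_isUnit _ ((isUnit_iff_isUnit_det _).mpr h.isUnit)]
  exact rank_submatrix_le A id c

def coeffMatrix {R : Type*} [CommRing R] (a b : R) (v : Fin 5 → R) : Matrix (Fin 4) (Fin 5) R :=
  Matrix.of ![![a, 0, -1, 0, 0], ![0, b, 0, 0, -1], ![b, a, 0, -2, 0],
    ![v 0, v 1, v 2, v 3, v 4]]

section CommRing

variable {R : Type*} [CommRing R] (a b : R) (v : Fin 5 → R)

theorem coeffMatrix_map {S : Type*} [CommRing S] (f : R →+* S) :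
    (coeffMatrix a b v).map f = coeffMatrix (f a) (f b) (f ∘ v) := by
  ext i j
  fin_cases i <;> fin_cases j <;> simp [coeffMatrix, map_ofNat]

theorem det_coeffMatrix_submatrix_succAbove_zero :
    ((coeffMatrix a b v).submatrix id (Fin.succAbove 0)).det = -2 * v 1 - v 3 * a - 2 * v 4 * b := by
  simp [coeffMatrix, det_succ_row_zero, Fin.sum_univ_succ, Fin.succAbove]
  ring

theorem det_coeffMatrix_submatrix_succAbove_one :
    ((coeffMatrix a b v).submatrix id (Fin.succAbove 1)).det = -2 * v 0 - 2 * v 2 * a - v 3 * b := by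
  simp [coeffMatrix, det_succ_row_zero, Fin.sum_univ_succ, Fin.succAbove]
  ring

end CommRing

theorem exists_det_coeffMatrix_submatrix_ne_zero {v : Fin 5 → ℝ} (hv : v ≠ 0) :
    ∃ c : Fin 4 → Fin 5, ∃ a b : ℝ, ((coeffMatrix a b v).submatrix id c).det ≠ 0 := by
  by_contra! h
  have h₀ (a b : ℝ) := det_coeffMatrix_submatrix_succAbove_zero a b v ▸ h (Fin.succAbove 0) a b
  have h₁ (a b : ℝ) := det_coeffMatrix_submatrix_succAbove_one a b v ▸ h (Fin.succAbove 1) a b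
  have := h₀ 0 0; have := h₀ 1 0; have := h₀ 0 1
  have := h₁ 0 0; have := h₁ 1 0
  exact hv <| funext fun i => by fin_cases i <;> simp <;> linarith

theorem stmt9 (v : Fin 5 → ℝ) (hv : v ≠ 0) :
    ∃ P : MvPolynomial (Fin 2) ℝ, P ≠ 0 ∧ ∀ a b : ℝ,
      MvPolynomial.eval ![a, b] P ≠ 0 →
      (Matrix.of ![![a, 0, -1, 0, 0], ![0, b, 0, 0, -1], ![b, a, 0, -2, 0],
        ![v 0, v 1, v 2, v 3, v 4]] : Matrix (Fin 4) (Fin 5) ℝ).rank = 4 := by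
  obtain ⟨c, a₀, b₀, hc⟩ := exists_det_coeffMatrix_submatrix_ne_zero hv
  let P : MvPolynomial (Fin 2) ℝ := ((coeffMatrix (X 0) (X 1) (C ∘ v)).submatrix id c).det
  have eval_P (a b : ℝ) : eval ![a, b] P = ((coeffMatrix a b v).submatrix id c).det := by
    rw [RingHom.map_det, RingHom.mapMatrix_apply, ← submatrix_map, coeffMatrix_map]
    simp [Function.comp_def]
  refine ⟨P, fun hP => hc ?_, fun a b hab => ?_⟩
  · rw [← eval_P, hP, map_zero]
  · rw [eval_P] at hab
    exact (coeffMatrix a b v).rank_eq_card_height_of_det_submatrix_ne_zero c hab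
end

section
/- Let $v,w,z\in\mathbb{R}^5$ be linearly independent. Then the $6\times 5$ matrix with rows $(a,0,-1,0,0)$, $(0,b,0,0,-1)$, $(b,a,0,-2,0)$, $v$, $w$, $z$ has rank $5$ for almost all $(a,b)\in\mathbb{R}^2$ (i.e., outside the zero set of a nonzero polynomial in $(a,b)$). -/
open MvPolynomial

noncomputable def Mr (p q : Fin 5 → ℝ) (a b : ℝ) : ℝ :=
  (p 0 + a * p 2 + b / 2 * p 3) * (q 1 + b * q 4 + a / 2 * q 3) -
  (q 0 + a * q 2 + b / 2 * q 3) * (p 1 + b * p 4 + a / 2 * p 3)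

noncomputable def Pm (p q : Fin 5 → ℝ) : MvPolynomial (Fin 2) ℝ :=
  (C (p 0) + C (p 2) * X 0 + C (p 3 / 2) * X 1) *
    (C (q 1) + C (q 4) * X 1 + C (q 3 / 2) * X 0) -
  (C (q 0) + C (q 2) * X 0 + C (q 3 / 2) * X 1) *
    (C (p 1) + C (p 4) * X 1 + C (p 3 / 2) * X 0)

lemma eval_Pm (p q : Fin 5 → ℝ) (a b : ℝ) :
    MvPolynomial.eval ![a, b] (Pm p q) = Mr p q a b := by
  simp [Pm, Mr]
  ring

lemma pair_rel (p q : Fin 5 → ℝ) (h : ∀ a b, Mr p q a b = 0) :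
    p 0 * q 1 - p 1 * q 0 = 0 ∧ p 2 * q 3 - p 3 * q 2 = 0 ∧
    p 3 * q 4 - p 4 * q 3 = 0 ∧ p 2 * q 4 - p 4 * q 2 = 0 := by
  simp only [Mr] at h
  refine ⟨by linear_combination h 0 0,
    by linear_combination h 1 0 + h (-1) 0 - 2 * h 0 0,
    by linear_combination h 0 1 + h 0 (-1) - 2 * h 0 0,
    by linear_combination h 1 1 - h 1 0 - h 0 1 + h 0 0⟩

lemma par2 (u w : Fin 2 → ℝ) (h : u 0 * w 1 - u 1 * w 0 = 0) (hu : u ≠ 0) :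
    ∃ c : ℝ, w = c • u := by
  by_cases h0 : u 0 = 0
  · have h1 : u 1 ≠ 0 := by
      intro h1; apply hu; funext i; fin_cases i <;> simp [h0, h1]
    have hw0 : w 0 = 0 := by
      have : u 1 * w 0 = 0 := by linear_combination -h + w 1 * h0
      exact (mul_eq_zero.mp this).resolve_left h1
    exact ⟨w 1 / u 1, by funext i; fin_cases i <;> simp [hw0, h0] <;> field_simp⟩
  · refine ⟨w 0 / u 0, funext fun i => ?_⟩
    fin_cases i
    · simp; field_simp
    · simp; field_simp; linear_combination h

lemma par3 (u w : Fin 3 → ℝ)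
    (h01 : u 0 * w 1 - u 1 * w 0 = 0)
    (h02 : u 0 * w 2 - u 2 * w 0 = 0)
    (h12 : u 1 * w 2 - u 2 * w 1 = 0) (hu : u ≠ 0) :
    ∃ c : ℝ, w = c • u := by
  by_cases h0 : u 0 = 0
  · by_cases h1 : u 1 = 0
    · have h2 : u 2 ≠ 0 := by
        intro h2; apply hu; funext i; fin_cases i <;> simp [h0, h1, h2]
      have hw0 : w 0 = 0 := by
        have : u 2 * w 0 = 0 := by linear_combination -h02 + w 2 * h0
        exact (mul_eq_zero.mp this).resolve_left h2
      have hw1 : w 1 = 0 := by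
        have : u 2 * w 1 = 0 := by linear_combination -h12 + w 2 * h1
        exact (mul_eq_zero.mp this).resolve_left h2
      refine ⟨w 2 / u 2, funext fun i => ?_⟩
      fin_cases i
      · simp [hw0, h0]
      · simp [hw1, h1]
      · simp; field_simp
    · have hw0 : w 0 = 0 := by
        have : u 1 * w 0 = 0 := by linear_combination -h01 + w 1 * h0
        exact (mul_eq_zero.mp this).resolve_left h1
      refine ⟨w 1 / u 1, funext fun i => ?_⟩
      fin_cases i
      · simp [hw0, h0]
      · simp; field_simp
      · simp; field_simp; linear_combination h12
  · refine ⟨w 0 / u 0, funext fun i => ?_⟩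
    fin_cases i
    · simp; field_simp
    · simp; field_simp; linear_combination h01
    · simp; field_simp; linear_combination h02

lemma ker_aux (a b : ℝ) (p q x : Fin 5 → ℝ)
    (hδ : Mr p q a b ≠ 0)
    (e0 : a * x 0 + -x 2 = 0)
    (e1 : b * x 1 + -x 4 = 0)
    (e2 : b * x 0 + a * x 1 + -(2 * x 3) = 0)
    (ep : p 0 * x 0 + p 1 * x 1 + p 2 * x 2 + p 3 * x 3 + p 4 * x 4 = 0)
    (eq' : q 0 * x 0 + q 1 * x 1 + q 2 * x 2 + q 3 * x 3 + q 4 * x 4 = 0) :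
    x = 0 := by
  simp only [Mr] at hδ
  have Ep : (p 0 + a * p 2 + b / 2 * p 3) * x 0 + (p 1 + b * p 4 + a / 2 * p 3) * x 1 = 0 := by
    linear_combination ep + p 2 * e0 + p 4 * e1 + (p 3 / 2) * e2
  have Eq : (q 0 + a * q 2 + b / 2 * q 3) * x 0 + (q 1 + b * q 4 + a / 2 * q 3) * x 1 = 0 := by
    linear_combination eq' + q 2 * e0 + q 4 * e1 + (q 3 / 2) * e2
  have h0 : x 0 = 0 := by
    have key : ((p 0 + a * p 2 + b / 2 * p 3) * (q 1 + b * q 4 + a / 2 * q 3) -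
        (q 0 + a * q 2 + b / 2 * q 3) * (p 1 + b * p 4 + a / 2 * p 3)) * x 0 = 0 := by
      linear_combination (q 1 + b * q 4 + a / 2 * q 3) * Ep - (p 1 + b * p 4 + a / 2 * p 3) * Eq
    exact (mul_eq_zero.mp key).resolve_left hδ
  have h1 : x 1 = 0 := by
    have key : ((p 0 + a * p 2 + b / 2 * p 3) * (q 1 + b * q 4 + a / 2 * q 3) -
        (q 0 + a * q 2 + b / 2 * q 3) * (p 1 + b * p 4 + a / 2 * p 3)) * x 1 = 0 := by
      linear_combination (p 0 + a * p 2 + b / 2 * p 3) * Eq - (q 0 + a * q 2 + b / 2 * q 3) * Ep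
    exact (mul_eq_zero.mp key).resolve_left hδ
  have h2 : x 2 = 0 := by linear_combination a * h0 - e0
  have h4 : x 4 = 0 := by linear_combination b * h1 - e1
  have h3 : x 3 = 0 := by linear_combination (b * h0 + a * h1 - e2) / 2
  funext i
  fin_cases i <;> simp [h0, h1, h2, h3, h4]

lemma three2 (u₁ u₂ u₃ : Fin 2 → ℝ)
    (h12 : u₁ 0 * u₂ 1 - u₁ 1 * u₂ 0 = 0)
    (h13 : u₁ 0 * u₃ 1 - u₁ 1 * u₃ 0 = 0)
    (h23 : u₂ 0 * u₃ 1 - u₂ 1 * u₃ 0 = 0) :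
    ∃ (e : _) (c₁ c₂ c₃ : ℝ), u₁ = c₁ • e ∧ u₂ = c₂ • e ∧ u₃ = c₃ • e := by
  by_cases h1 : u₁ = 0
  · by_cases h2 : u₂ = 0
    · exact ⟨u₃, 0, 0, 1, by simp [h1], by simp [h2], by simp⟩
    · obtain ⟨c, hc⟩ := par2 u₂ u₃ h23 h2
      exact ⟨u₂, 0, 1, c, by simp [h1], by simp, hc⟩
  · obtain ⟨c2, hc2⟩ := par2 u₁ u₂ h12 h1
    obtain ⟨c3, hc3⟩ := par2 u₁ u₃ h13 h1
    exact ⟨u₁, 1, c2, c3, by simp, hc2, hc3⟩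

lemma three3 (u₁ u₂ u₃ : Fin 3 → ℝ)
    (a12 : u₁ 0 * u₂ 1 - u₁ 1 * u₂ 0 = 0)
    (b12 : u₁ 0 * u₂ 2 - u₁ 2 * u₂ 0 = 0)
    (c12 : u₁ 1 * u₂ 2 - u₁ 2 * u₂ 1 = 0)
    (a13 : u₁ 0 * u₃ 1 - u₁ 1 * u₃ 0 = 0)
    (b13 : u₁ 0 * u₃ 2 - u₁ 2 * u₃ 0 = 0)
    (c13 : u₁ 1 * u₃ 2 - u₁ 2 * u₃ 1 = 0)
    (a23 : u₂ 0 * u₃ 1 - u₂ 1 * u₃ 0 = 0)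
    (b23 : u₂ 0 * u₃ 2 - u₂ 2 * u₃ 0 = 0)
    (c23 : u₂ 1 * u₃ 2 - u₂ 2 * u₃ 1 = 0) :
    ∃ (e : _) (c₁ c₂ c₃ : ℝ), u₁ = c₁ • e ∧ u₂ = c₂ • e ∧ u₃ = c₃ • e := by
  by_cases h1 : u₁ = 0
  · by_cases h2 : u₂ = 0
    · exact ⟨u₃, 0, 0, 1, by simp [h1], by simp [h2], by simp⟩
    · obtain ⟨c, hc⟩ := par3 u₂ u₃ a23 b23 c23 h2
      exact ⟨u₂, 0, 1, c, by simp [h1], by simp, hc⟩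
  · obtain ⟨c2, hc2⟩ := par3 u₁ u₂ a12 b12 c12 h1
    obtain ⟨c3, hc3⟩ := par3 u₁ u₃ a13 b13 c13 h1
    exact ⟨u₁, 1, c2, c3, by simp, hc2, hc3⟩

lemma dep_contra (v w z : Fin 5 → ℝ)
    (hvw : ∀ a b, Mr v w a b = 0) (hvz : ∀ a b, Mr v z a b = 0)
    (hwz : ∀ a b, Mr w z a b = 0) : ¬ LinearIndependent ℝ ![v, w, z] := by
  intro hind
  obtain ⟨d1vw, d2vw, d3vw, d4vw⟩ := pair_rel v w hvw
  obtain ⟨d1vz, d2vz, d3vz, d4vz⟩ := pair_rel v z hvz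
  obtain ⟨d1wz, d2wz, d3wz, d4wz⟩ := pair_rel w z hwz
  obtain ⟨e, α₁, α₂, α₃, he1, he2, he3⟩ :=
    three2 ![v 0, v 1] ![w 0, w 1] ![z 0, z 1]
      (by simpa using d1vw) (by simpa using d1vz) (by simpa using d1wz)
  obtain ⟨f, β₁, β₂, β₃, hf1, hf2, hf3⟩ :=
    three3 ![v 2, v 3, v 4] ![w 2, w 3, w 4] ![z 2, z 3, z 4]
      (by simpa using d2vw) (by simpa using d4vw) (by simpa using d3vw)
      (by simpa using d2vz) (by simpa using d4vz) (by simpa using d3vz)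
      (by simpa using d2wz) (by simpa using d4wz) (by simpa using d3wz)
  set E1 : Fin 5 → ℝ := ![e 0, e 1, 0, 0, 0] with hE1
  set E2 : Fin 5 → ℝ := ![0, 0, f 0, f 1, f 2] with hE2
  have mem : ∀ (u : Fin 5 → ℝ) (c d : ℝ), (![u 0, u 1] : Fin 2 → ℝ) = c • e →
      (![u 2, u 3, u 4] : Fin 3 → ℝ) = d • f → u ∈ Submodule.span ℝ {E1, E2} := by
    intro u c d hc hd
    refine Submodule.mem_span_pair.mpr ⟨c, d, ?_⟩
    have h0 := congrFun hc 0
    have h1 := congrFun hc 1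
    have h2 := congrFun hd 0
    have h3 := congrFun hd 1
    have h4 := congrFun hd 2
    simp at h0 h1 h2 h3 h4
    funext i
    fin_cases i <;> simp [hE1, hE2, h0, h1, h2, h3, h4]
  have hle : Submodule.span ℝ (Set.range ![v, w, z]) ≤ Submodule.span ℝ {E1, E2} := by
    rw [Submodule.span_le]
    rintro u ⟨i, rfl⟩
    fin_cases i
    · simpa using mem v α₁ β₁ he1 hf1
    · simpa using mem w α₂ β₂ he2 hf2
    · simpa using mem z α₃ β₃ he3 hf3
  have hfr : Module.finrank ℝ (Submodule.span ℝ (Set.range ![v, w, z])) = 3 := by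
    rw [finrank_span_eq_card hind]; simp
  have hb : Module.finrank ℝ (Submodule.span ℝ ({E1, E2} : Set (Fin 5 → ℝ))) ≤ 2 := by
    classical
    refine le_trans (finrank_span_le_card _) ?_
    rw [Set.toFinset_insert, Set.toFinset_singleton]
    exact le_trans (Finset.card_insert_le _ _) (by simp)
  have := (Submodule.finrank_mono hle).trans hb
  rw [hfr] at this
  omega

theorem stmt10 (v w z : Fin 5 → ℝ) (hind : LinearIndependent ℝ ![v, w, z]) :
    ∃ P : MvPolynomial (Fin 2) ℝ, P ≠ 0 ∧ ∀ a b : ℝ,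
      MvPolynomial.eval ![a, b] P ≠ 0 →
      (Matrix.of ![![a, 0, -1, 0, 0], ![0, b, 0, 0, -1], ![b, a, 0, -2, 0],
        v, w, z] : Matrix (Fin 6) (Fin 5) ℝ).rank = 5 := by
  refine ⟨(Pm v w) ^ 2 + (Pm v z) ^ 2 + (Pm w z) ^ 2, ?_, ?_⟩
  · intro hP
    have hz : ∀ a b, Mr v w a b = 0 ∧ Mr v z a b = 0 ∧ Mr w z a b = 0 := by
      intro a b
      have h := congrArg (MvPolynomial.eval ![a, b]) hP
      simp only [map_add, map_pow, eval_Pm, map_zero] at h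
      refine ⟨?_, ?_, ?_⟩ <;>
        nlinarith [sq_nonneg (Mr v w a b), sq_nonneg (Mr v z a b), sq_nonneg (Mr w z a b)]
    exact dep_contra v w z (fun a b => (hz a b).1) (fun a b => (hz a b).2.1)
      (fun a b => (hz a b).2.2) hind
  · intro a b hev
    have hd : Mr v w a b ≠ 0 ∨ Mr v z a b ≠ 0 ∨ Mr w z a b ≠ 0 := by
      by_contra hc
      push_neg at hc
      apply hev
      simp only [map_add, map_pow, eval_Pm, hc.1, hc.2.1, hc.2.2]
      ring
    have hker : ∀ x : Fin 5 → ℝ,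
        (Matrix.of ![![a, 0, -1, 0, 0], ![0, b, 0, 0, -1], ![b, a, 0, -2, 0],
          v, w, z] : Matrix (Fin 6) (Fin 5) ℝ).mulVec x = 0 → x = 0 := by
      intro x hx
      have e0 := congrFun hx 0
      have e1 := congrFun hx 1
      have e2 := congrFun hx 2
      have e3 := congrFun hx 3
      have e4 := congrFun hx 4
      have e5 := congrFun hx 5
      simp [Matrix.mulVec, dotProduct, Fin.sum_univ_five, Matrix.cons_val_succ, show (5 : Fin 6) = Fin.succ 4 from rfl] at e0 e1 e2 e3 e4 e5
      rcases hd with h | h | h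
      · exact ker_aux a b v w x h (by linear_combination e0) (by linear_combination e1)
          (by linear_combination e2) (by linear_combination e3) (by linear_combination e4)
      · exact ker_aux a b v z x h (by linear_combination e0) (by linear_combination e1)
          (by linear_combination e2) (by linear_combination e3) (by linear_combination e5)
      · exact ker_aux a b w z x h (by linear_combination e0) (by linear_combination e1)
          (by linear_combination e2) (by linear_combination e4) (by linear_combination e5)
    have hinj : Function.Injective ((Matrix.of ![![a, 0, -1, 0, 0], ![0, b, 0, 0, -1],
        ![b, a, 0, -2, 0], v, w, z] : Matrix (Fin 6) (Fin 5) ℝ).mulVecLin) := by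
      rw [← LinearMap.ker_eq_bot, LinearMap.ker_eq_bot']
      intro m hm
      exact hker m (by simpa using hm)
    rw [Matrix.rank, LinearMap.finrank_range_of_inj hinj]
    simp
end
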